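/- arXiv:2208.04652 — 2 statements merged into one kernel-verified Lean document; each statement's English description precedes it below -/
import Mathlib

section
/- Let φ : V → V' be a surjective anti-homomorphism of Lie superalgebras and let A₁, A₂, B₁, B₂, A, B be CIF vector subspaces of V, all pairwise homogeneous with one another and with the derived CIF sets appearing below. Then for all α, β ∈ K: [φ(αA₁ + βA₂), φ(B)] = α[φ(A₁), φ(B)] + β[φ(A₂), φ(B)] and [φ(A), φ(αB₁ + βB₂)] = α[φ(A), φ(B₁)] + β[φ(A), φ(B₂)] as CIF sets on V'. -/
namespace CIF

/-- A complex intuitionistic fuzzy (CIF) set on `V`, recorded by the four real-valued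
degree functions `r, ω, r̂, ω̂` (so that the membership degree is `λ = r·e^{i2πω}` and
the non-membership degree is `ρ = r̂·e^{i2πω̂}`).  The order on such complex values is
componentwise, so all notions below are phrased componentwise in the four functions. -/
structure CIFSet (V : Type*) where
  r : V → ℝ
  w : V → ℝ
  rhat : V → ℝ
  what : V → ℝ

namespace CIFSet

/-- `A` is a genuine CIF set: all degree functions take values in `[0,1]` and
`r_A(x) + r̂_A(x) ≤ 1` for all `x`. -/
def IsCIF {V : Type*} (A : CIFSet V) : Prop :=
  ∀ x, A.r x ∈ Set.Icc (0 : ℝ) 1 ∧ A.w x ∈ Set.Icc (0 : ℝ) 1 ∧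
    A.rhat x ∈ Set.Icc (0 : ℝ) 1 ∧ A.what x ∈ Set.Icc (0 : ℝ) 1 ∧
    A.r x + A.rhat x ≤ 1

/-- `A ⊆ B` : `λ_A(x) ≤ λ_B(x)` and `ρ_A(x) ≥ ρ_B(x)` for all `x`
(componentwise in `r, ω`, resp. `r̂, ω̂`). -/
def Subset {V : Type*} (A B : CIFSet V) : Prop :=
  ∀ x, A.r x ≤ B.r x ∧ A.w x ≤ B.w x ∧ B.rhat x ≤ A.rhat x ∧ B.what x ≤ A.what x

/-- `A` is homogeneous with `B`. -/
def Homog {V : Type*} (A B : CIFSet V) : Prop :=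
  (∀ x y, A.r x ≤ B.r y ↔ A.w x ≤ B.w y) ∧
  (∀ x y, A.rhat x ≤ B.rhat y ↔ A.what x ≤ B.what y)

end CIFSet

/-- Supremum of `min (f a) (g b)` over all decompositions `x = a + b`
(the `insert 0` is harmless since all values are `≥ 0`, and makes the value `0`
when no decomposition exists). -/
noncomputable def supDecomp {V : Type*} [Add V] (f g : V → ℝ) (x : V) : ℝ :=
  sSup (insert 0 {t | ∃ a b : V, x = a + b ∧ t = min (f a) (g b)})

/-- Infimum of `max (f a) (g b)` over all decompositions `x = a + b`
(the `insert 1` is harmless since all values are `≤ 1`, and makes the value `1`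
when no decomposition exists). -/
noncomputable def infDecomp {V : Type*} [Add V] (f g : V → ℝ) (x : V) : ℝ :=
  sInf (insert 1 {t | ∃ a b : V, x = a + b ∧ t = max (f a) (g b)})

/-- The complex intuitionistic sum `A + B` of two CIF sets. -/
noncomputable def CIFSet.sum {V : Type*} [Add V] (A B : CIFSet V) : CIFSet V where
  r := supDecomp A.r B.r
  w := supDecomp A.w B.w
  rhat := infDecomp A.rhat B.rhat
  what := infDecomp A.what B.what

/-- `A` is a CIF vector subspace of `V` (with the normalizations
`λ_A(0) = 1·e^{i2π·1}` and `ρ_A(0) = 0·e^{i2π·0}`). -/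
structure CIFSet.IsSubspace (K : Type*) [Field K] {V : Type*} [AddCommGroup V]
    [Module K V] (A : CIFSet V) : Prop where
  isCIF : A.IsCIF
  add_r : ∀ x y, min (A.r x) (A.r y) ≤ A.r (x + y)
  add_w : ∀ x y, min (A.w x) (A.w y) ≤ A.w (x + y)
  add_rhat : ∀ x y, A.rhat (x + y) ≤ max (A.rhat x) (A.rhat y)
  add_what : ∀ x y, A.what (x + y) ≤ max (A.what x) (A.what y)
  smul_r : ∀ (c : K) (x : V), A.r x ≤ A.r (c • x)
  smul_w : ∀ (c : K) (x : V), A.w x ≤ A.w (c • x)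
  smul_rhat : ∀ (c : K) (x : V), A.rhat (c • x) ≤ A.rhat x
  smul_what : ∀ (c : K) (x : V), A.what (c • x) ≤ A.what x
  r_zero : A.r 0 = 1
  w_zero : A.w 0 = 1
  rhat_zero : A.rhat 0 = 0
  what_zero : A.what 0 = 0

open Classical in
/-- The scalar multiple `c • A` of a CIF set: for `c ≠ 0` it is `x ↦ A(c⁻¹ x)`;
for `c = 0` it is `1 = 1·e^{i2π·1}` (resp. `ρ = 0`) at `0`, and `λ = 0`, `ρ = 1·e^{i2π·1}`
elsewhere. -/
noncomputable def CIFSet.smulCIF {K : Type*} [Field K] {V : Type*} [AddCommGroup V]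
    [Module K V] (c : K) (A : CIFSet V) : CIFSet V where
  r x := if c = 0 then (if x = 0 then 1 else 0) else A.r (c⁻¹ • x)
  w x := if c = 0 then (if x = 0 then 1 else 0) else A.w (c⁻¹ • x)
  rhat x := if c = 0 then (if x = 0 then 0 else 1) else A.rhat (c⁻¹ • x)
  what x := if c = 0 then (if x = 0 then 0 else 1) else A.what (c⁻¹ • x)

/-- The set of values `minᵢ (min (f xᵢ) (g yᵢ))` over all finite representations
`x = Σᵢ cᵢ • ⁅xᵢ, yᵢ⁆` with `cᵢ ∈ K`, `xᵢ, yᵢ ∈ V` (nonempty index family). -/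
def bracketRepMin (K : Type*) [Field K] {V : Type*} [AddCommGroup V] [Module K V]
    (br : V → V → V) (f g : V → ℝ) (x : V) : Set ℝ :=
  {t | ∃ (n : ℕ) (c : Fin (n + 1) → K) (a b : Fin (n + 1) → V),
    x = ∑ i, c i • br (a i) (b i) ∧
    t = Finset.univ.inf' Finset.univ_nonempty fun i => min (f (a i)) (g (b i))}

/-- The set of values `maxᵢ (max (f xᵢ) (g yᵢ))` over all finite representations
`x = Σᵢ cᵢ • ⁅xᵢ, yᵢ⁆`. -/
def bracketRepMax (K : Type*) [Field K] {V : Type*} [AddCommGroup V] [Module K V]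
    (br : V → V → V) (f g : V → ℝ) (x : V) : Set ℝ :=
  {t | ∃ (n : ℕ) (c : Fin (n + 1) → K) (a b : Fin (n + 1) → V),
    x = ∑ i, c i • br (a i) (b i) ∧
    t = Finset.univ.sup' Finset.univ_nonempty fun i => max (f (a i)) (g (b i))}

/-- The complex intuitionistic fuzzy bracket product `[A, B]` of two CIF sets, with
respect to the bracket `br` on `V`:  `r` and `ω` are the sup over all finite
representations `x = Σᵢ cᵢ [xᵢ, yᵢ]` of `minᵢ min(·(xᵢ), ·(yᵢ))` (and `0` when no
representation exists), `r̂` and `ω̂` are the inf of `maxᵢ max(·(xᵢ), ·(yᵢ))`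
(and `1` when no representation exists). -/
noncomputable def CIFSet.bracket (K : Type*) [Field K] {V : Type*} [AddCommGroup V]
    [Module K V] (br : V → V → V) (A B : CIFSet V) : CIFSet V where
  r x := sSup (insert 0 (bracketRepMin K br A.r B.r x))
  w x := sSup (insert 0 (bracketRepMin K br A.w B.w x))
  rhat x := sInf (insert 1 (bracketRepMax K br A.rhat B.rhat x))
  what x := sInf (insert 1 (bracketRepMax K br A.what B.what x))

/-- `V`, with the grading given by the complementary submodules `V0, V1` and the
bracket `br`, is a Lie superalgebra over `K`: the bracket is bilinear, respects the
grading, and satisfies super skew-symmetry and the super Jacobi identity on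
homogeneous elements (grades are recorded as `Bool`, `false ↦ V0`, `true ↦ V1`). -/
structure IsLieSuper (K : Type*) [Field K] {V : Type*} [AddCommGroup V] [Module K V]
    (V0 V1 : Submodule K V) (br : V → V → V) : Prop where
  compl : IsCompl V0 V1
  add_left : ∀ x y z : V, br (x + y) z = br x z + br y z
  add_right : ∀ x y z : V, br x (y + z) = br x y + br x z
  smul_left : ∀ (c : K) (x y : V), br (c • x) y = c • br x y
  smul_right : ∀ (c : K) (x y : V), br x (c • y) = c • br x y
  grade : ∀ (g h : Bool), ∀ x ∈ (bif g then V1 else V0), ∀ y ∈ (bif h then V1 else V0),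
    br x y ∈ (bif xor g h then V1 else V0)
  skew : ∀ (g h : Bool), ∀ x ∈ (bif g then V1 else V0), ∀ y ∈ (bif h then V1 else V0),
    br x y = -(((-1 : K) ^ ((bif g then 1 else 0) * (bif h then 1 else 0) : ℕ)) • br y x)
  jacobi : ∀ (g h k : Bool), ∀ x ∈ (bif g then V1 else V0), ∀ y ∈ (bif h then V1 else V0),
    ∀ z ∈ (bif k then V1 else V0),
    ((-1 : K) ^ ((bif g then 1 else 0) * (bif k then 1 else 0) : ℕ)) • br x (br y z) +
    ((-1 : K) ^ ((bif g then 1 else 0) * (bif h then 1 else 0) : ℕ)) • br y (br z x) +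
    ((-1 : K) ^ ((bif h then 1 else 0) * (bif k then 1 else 0) : ℕ)) • br z (br x y) = 0

/-- `A` is a ℤ₂-graded CIF vector subspace of `V` with graded components `A0, A1`:
`A0, A1` are CIF vector subspaces supported in `V0` resp. `V1` (membership degree `0`
and non-membership degree `1` outside), and `A = A0 + A1`. -/
structure IsGradedSubspace (K : Type*) [Field K] {V : Type*} [AddCommGroup V]
    [Module K V] (V0 V1 : Submodule K V) (A A0 A1 : CIFSet V) : Prop where
  subA : CIFSet.IsSubspace K A
  sub0 : CIFSet.IsSubspace K A0
  sub1 : CIFSet.IsSubspace K A1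
  supp0 : ∀ x, x ∉ V0 → A0.r x = 0 ∧ A0.w x = 0 ∧ A0.rhat x = 1 ∧ A0.what x = 1
  supp1 : ∀ x, x ∉ V1 → A1.r x = 0 ∧ A1.w x = 0 ∧ A1.rhat x = 1 ∧ A1.what x = 1
  eq : A = A0.sum A1

/-- `A` is a ℤ₂-graded CIF vector subspace of `V`. -/
def IsGraded (K : Type*) [Field K] {V : Type*} [AddCommGroup V] [Module K V]
    (V0 V1 : Submodule K V) (A : CIFSet V) : Prop :=
  ∃ A0 A1 : CIFSet V, IsGradedSubspace K V0 V1 A A0 A1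

/-- `A` is a CIF ideal of the Lie superalgebra `V`: a ℤ₂-graded CIF vector subspace
with `λ_A([x,y]) ≥ λ_A(x) ∨ λ_A(y)` and `ρ_A([x,y]) ≤ ρ_A(x) ∧ ρ_A(y)`. -/
structure IsIdeal (K : Type*) [Field K] {V : Type*} [AddCommGroup V] [Module K V]
    (V0 V1 : Submodule K V) (br : V → V → V) (A : CIFSet V) : Prop where
  graded : IsGraded K V0 V1 A
  br_r : ∀ x y, max (A.r x) (A.r y) ≤ A.r (br x y)
  br_w : ∀ x y, max (A.w x) (A.w y) ≤ A.w (br x y)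
  br_rhat : ∀ x y, A.rhat (br x y) ≤ min (A.rhat x) (A.rhat y)
  br_what : ∀ x y, A.what (br x y) ≤ min (A.what x) (A.what y)

/-- `f : V → V'` is an anti-homomorphism of Lie superalgebras: a `K`-linear map
preserving the grading with `f [x, y] = -[f x, f y]`. -/
structure IsAntiHom (K : Type*) [Field K] {V V' : Type*} [AddCommGroup V] [Module K V]
    [AddCommGroup V'] [Module K V'] (V0 V1 : Submodule K V) (W0 W1 : Submodule K V')
    (br : V → V → V) (br' : V' → V' → V') (f : V → V') : Prop where
  map_add : ∀ x y, f (x + y) = f x + f y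
  map_smul : ∀ (c : K) (x : V), f (c • x) = c • f x
  map_gr0 : ∀ x ∈ V0, f x ∈ W0
  map_gr1 : ∀ x ∈ V1, f x ∈ W1
  map_br : ∀ x y, f (br x y) = -br' (f x) (f y)

open Classical in
/-- The image `f(A)` of a CIF set under `f`: `λ_{f(A)}(y) = sup_{f x = y} λ_A(x)`
(componentwise) for `y` in the range of `f`, and `0` otherwise; `ρ_{f(A)}(y)` is the
corresponding inf, and `1` outside the range. -/
noncomputable def CIFSet.image {V V' : Type*} (f : V → V') (A : CIFSet V) :
    CIFSet V' where
  r y := if y ∈ Set.range f then sSup {t | ∃ x, f x = y ∧ t = A.r x} else 0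
  w y := if y ∈ Set.range f then sSup {t | ∃ x, f x = y ∧ t = A.w x} else 0
  rhat y := if y ∈ Set.range f then sInf {t | ∃ x, f x = y ∧ t = A.rhat x} else 1
  what y := if y ∈ Set.range f then sInf {t | ∃ x, f x = y ∧ t = A.what x} else 1

/-- The preimage `f⁻¹(B)` of a CIF set under `f`: `λ_{f⁻¹(B)}(x) = λ_B(f x)` and
`ρ_{f⁻¹(B)}(x) = ρ_B(f x)`. -/
def CIFSet.preimage {V V' : Type*} (f : V → V') (B : CIFSet V') : CIFSet V where
  r x := B.r (f x)
  w x := B.w (f x)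
  rhat x := B.rhat (f x)
  what x := B.what (f x)


/-! ### Auxiliary development for `image_bracket_bilinear` -/

section Aux

open Finset

/-- All values of `p` lie in `[0,1]`. -/
def B01 {W : Type*} (p : W → ℝ) : Prop := ∀ z, 0 ≤ p z ∧ p z ≤ 1

private lemma bddAbove_of_le_one {S : Set ℝ} (h : ∀ t ∈ S, t ≤ 1) : BddAbove S := ⟨1, h⟩

private lemma bddBelow_of_nonneg {S : Set ℝ} (h : ∀ t ∈ S, 0 ≤ t) : BddBelow S := ⟨0, h⟩

/-- Extensionality for `CIFSet`. -/
lemma CIFSet.ext4 {V : Type*} {A B : CIFSet V} (h1 : A.r = B.r) (h2 : A.w = B.w)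
    (h3 : A.rhat = B.rhat) (h4 : A.what = B.what) : A = B := by
  cases A; cases B; cases h1; cases h2; cases h3; cases h4; rfl

section Decomp

variable {W : Type*} [AddCommGroup W]

lemma supDecomp_mem_le_one {C D : W → ℝ} (hC : B01 C) (hD : B01 D) (x : W) :
    ∀ t ∈ insert (0:ℝ) {t | ∃ a b : W, x = a + b ∧ t = min (C a) (D b)}, t ≤ 1 := by
  rintro t (rfl | ⟨a, b, hab, rfl⟩)
  · exact zero_le_one
  · exact le_trans (min_le_left _ _) (hC a).2

lemma infDecomp_mem_nonneg {C D : W → ℝ} (hC : B01 C) (hD : B01 D) (x : W) :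
    ∀ t ∈ insert (1:ℝ) {t | ∃ a b : W, x = a + b ∧ t = max (C a) (D b)}, 0 ≤ t := by
  rintro t (rfl | ⟨a, b, hab, rfl⟩)
  · exact zero_le_one
  · exact le_trans (hC a).1 (le_max_left _ _)

lemma supDecomp_nonneg {C D : W → ℝ} (hC : B01 C) (hD : B01 D) (x : W) :
    0 ≤ supDecomp C D x :=
  Real.sSup_nonneg (by rintro t (rfl | ⟨a, b, hab, rfl⟩)
                       exacts [le_refl 0, le_min (hC a).1 (hD b).1])

lemma supDecomp_le_one {C D : W → ℝ} (hC : B01 C) (hD : B01 D) (x : W) :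
    supDecomp C D x ≤ 1 :=
  csSup_le (Set.insert_nonempty _ _) (supDecomp_mem_le_one hC hD x)

lemma B01_supDecomp {C D : W → ℝ} (hC : B01 C) (hD : B01 D) : B01 (supDecomp C D) :=
  fun x => ⟨supDecomp_nonneg hC hD x, supDecomp_le_one hC hD x⟩

lemma infDecomp_nonneg {C D : W → ℝ} (hC : B01 C) (hD : B01 D) (x : W) :
    0 ≤ infDecomp C D x :=
  le_csInf (Set.insert_nonempty _ _) (infDecomp_mem_nonneg hC hD x)

lemma infDecomp_le_one {C D : W → ℝ} (hC : B01 C) (hD : B01 D) (x : W) :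
    infDecomp C D x ≤ 1 :=
  csInf_le (bddBelow_of_nonneg (infDecomp_mem_nonneg hC hD x)) (Set.mem_insert _ _)

lemma B01_infDecomp {C D : W → ℝ} (hC : B01 C) (hD : B01 D) : B01 (infDecomp C D) :=
  fun x => ⟨infDecomp_nonneg hC hD x, infDecomp_le_one hC hD x⟩

lemma le_supDecomp {C D : W → ℝ} (hC : B01 C) (hD : B01 D) {x u v : W} (huv : x = u + v) :
    min (C u) (D v) ≤ supDecomp C D x :=
  le_csSup (bddAbove_of_le_one (supDecomp_mem_le_one hC hD x))
    (Set.mem_insert_of_mem _ ⟨u, v, huv, rfl⟩)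

lemma infDecomp_le {C D : W → ℝ} (hC : B01 C) (hD : B01 D) {x u v : W} (huv : x = u + v) :
    infDecomp C D x ≤ max (C u) (D v) :=
  csInf_le (bddBelow_of_nonneg (infDecomp_mem_nonneg hC hD x))
    (Set.mem_insert_of_mem _ ⟨u, v, huv, rfl⟩)

lemma le_supDecomp_left {C D : W → ℝ} (hC : B01 C) (hD : B01 D) (hD0 : D 0 = 1) (z : W) :
    C z ≤ supDecomp C D z := by
  have h := le_supDecomp hC hD (add_zero z).symm
  rwa [hD0, min_eq_left (hC z).2] at h

lemma le_supDecomp_right {C D : W → ℝ} (hC : B01 C) (hD : B01 D) (hC0 : C 0 = 1) (z : W) :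
    D z ≤ supDecomp C D z := by
  have h := le_supDecomp hC hD (zero_add z).symm
  rwa [hC0, min_eq_right (hD z).2] at h

lemma infDecomp_le_left {C D : W → ℝ} (hC : B01 C) (hD : B01 D) (hD0 : D 0 = 0) (z : W) :
    infDecomp C D z ≤ C z := by
  have h := infDecomp_le hC hD (add_zero z).symm
  rwa [hD0, max_eq_left (hC z).1] at h

lemma infDecomp_le_right {C D : W → ℝ} (hC : B01 C) (hD : B01 D) (hC0 : C 0 = 0) (z : W) :
    infDecomp C D z ≤ D z := by
  have h := infDecomp_le hC hD (zero_add z).symm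
  rwa [hC0, max_eq_right (hD z).1] at h

end Decomp
section Bracket

variable (K : Type*) [Field K] {W : Type*} [AddCommGroup W] [Module K W] (br : W → W → W)

/-- `r`-style component of the bracket product. -/
noncomputable def BSup (p q : W → ℝ) (x : W) : ℝ :=
  sSup (insert 0 (bracketRepMin K br p q x))

/-- `r̂`-style component of the bracket product. -/
noncomputable def BInf (p q : W → ℝ) (x : W) : ℝ :=
  sInf (insert 1 (bracketRepMax K br p q x))

lemma bracket_r' (A B : CIFSet W) : (CIFSet.bracket K br A B).r = BSup K br A.r B.r := rfl
lemma bracket_w' (A B : CIFSet W) : (CIFSet.bracket K br A B).w = BSup K br A.w B.w := rfl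
lemma bracket_rhat' (A B : CIFSet W) :
    (CIFSet.bracket K br A B).rhat = BInf K br A.rhat B.rhat := rfl
lemma bracket_what' (A B : CIFSet W) :
    (CIFSet.bracket K br A B).what = BInf K br A.what B.what := rfl

lemma sum_r' (A B : CIFSet W) : (A.sum B).r = supDecomp A.r B.r := rfl
lemma sum_w' (A B : CIFSet W) : (A.sum B).w = supDecomp A.w B.w := rfl
lemma sum_rhat' (A B : CIFSet W) : (A.sum B).rhat = infDecomp A.rhat B.rhat := rfl
lemma sum_what' (A B : CIFSet W) : (A.sum B).what = infDecomp A.what B.what := rfl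

variable {br}

lemma brMin_mem_le_one {p q : W → ℝ} (hq : B01 q) (x : W) :
    ∀ t ∈ insert (0:ℝ) (bracketRepMin K br p q x), t ≤ 1 := by
  rintro t (rfl | ⟨n, c, a, b, hx, rfl⟩)
  · exact zero_le_one
  · exact le_trans (Finset.inf'_le _ (Finset.mem_univ 0))
      (le_trans (min_le_right _ _) (hq _).2)

lemma brMin_mem_nonneg {p q : W → ℝ} (hp : B01 p) (hq : B01 q) (x : W) :
    ∀ t ∈ insert (0:ℝ) (bracketRepMin K br p q x), 0 ≤ t := by
  rintro t (rfl | ⟨n, c, a, b, hx, rfl⟩)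
  · exact le_refl 0
  · exact Finset.le_inf' _ _ fun i _ => le_min (hp _).1 (hq _).1

lemma brMax_mem_nonneg {p q : W → ℝ} (hq : B01 q) (x : W) :
    ∀ t ∈ insert (1:ℝ) (bracketRepMax K br p q x), 0 ≤ t := by
  rintro t (rfl | ⟨n, c, a, b, hx, rfl⟩)
  · exact zero_le_one
  · exact le_trans ((hq (b 0)).1.trans (le_max_right (p (a 0)) (q (b 0))))
      (Finset.le_sup' (fun i => max (p (a i)) (q (b i))) (Finset.mem_univ 0))

lemma brMax_mem_le_one {p q : W → ℝ} (hp : B01 p) (hq : B01 q) (x : W) :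
    ∀ t ∈ insert (1:ℝ) (bracketRepMax K br p q x), t ≤ 1 := by
  rintro t (rfl | ⟨n, c, a, b, hx, rfl⟩)
  · exact le_refl 1
  · exact Finset.sup'_le _ _ fun i _ => max_le (hp _).2 (hq _).2

lemma BSup_nonneg {p q : W → ℝ} (hp : B01 p) (hq : B01 q) (x : W) :
    0 ≤ BSup K br p q x :=
  Real.sSup_nonneg (brMin_mem_nonneg K hp hq x)

lemma BSup_le_one {p q : W → ℝ} (hq : B01 q) (x : W) : BSup K br p q x ≤ 1 :=
  csSup_le (Set.insert_nonempty _ _) (brMin_mem_le_one K hq x)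

lemma B01_BSup {p q : W → ℝ} (hp : B01 p) (hq : B01 q) : B01 (BSup K br p q) :=
  fun x => ⟨BSup_nonneg K hp hq x, BSup_le_one K hq x⟩

lemma BInf_nonneg {p q : W → ℝ} (hq : B01 q) (x : W) : 0 ≤ BInf K br p q x :=
  le_csInf (Set.insert_nonempty _ _) (brMax_mem_nonneg K hq x)

lemma BInf_le_one {p q : W → ℝ} (hq : B01 q) (x : W) : BInf K br p q x ≤ 1 :=
  csInf_le (bddBelow_of_nonneg (brMax_mem_nonneg K hq x)) (Set.mem_insert _ _)

lemma B01_BInf {p q : W → ℝ} (hp : B01 p) (hq : B01 q) : B01 (BInf K br p q) :=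
  fun x => ⟨BInf_nonneg K hq x, BInf_le_one K hq x⟩

lemma le_BSup {p q : W → ℝ} (hq : B01 q) {x : W} {t : ℝ}
    (h : t ∈ bracketRepMin K br p q x) : t ≤ BSup K br p q x :=
  le_csSup (bddAbove_of_le_one (brMin_mem_le_one K hq x)) (Set.mem_insert_of_mem _ h)

lemma BInf_le {p q : W → ℝ} (hq : B01 q) {x : W} {t : ℝ}
    (h : t ∈ bracketRepMax K br p q x) : BInf K br p q x ≤ t :=
  csInf_le (bddBelow_of_nonneg (brMax_mem_nonneg K hq x)) (Set.mem_insert_of_mem _ h)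

lemma near_BSup {p q : W → ℝ} (x : W) {ε : ℝ} (hε : 0 < ε) :
    ∃ t ∈ insert (0:ℝ) (bracketRepMin K br p q x), BSup K br p q x - ε < t :=
  exists_lt_of_lt_csSup (Set.insert_nonempty _ _) (sub_lt_self _ hε)

lemma near_BInf {p q : W → ℝ} (x : W) {ε : ℝ} (hε : 0 < ε) :
    ∃ t ∈ insert (1:ℝ) (bracketRepMax K br p q x), t < BInf K br p q x + ε :=
  exists_lt_of_csInf_lt (Set.insert_nonempty _ _) (lt_add_of_pos_right _ hε)

lemma exists_concat_supDecomp {C D q : W → ℝ} (hC : B01 C) (hD : B01 D)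
    (hC0 : C 0 = 1) (hD0 : D 0 = 1) {U V : W} {s s' : ℝ}
    (hs : s ∈ bracketRepMin K br C q U) (hs' : s' ∈ bracketRepMin K br D q V) :
    ∃ r ∈ bracketRepMin K br (supDecomp C D) q (U + V), min s s' ≤ r := by
  obtain ⟨n, c, a, b, hU, rfl⟩ := hs
  obtain ⟨m, d, e, g, hV, rfl⟩ := hs'
  haveI : Nonempty (Fin ((n+1)+(m+1))) := ⟨⟨0, by omega⟩⟩
  have hsum : U + V = ∑ i : Fin ((n+1)+(m+1)),
      Fin.append c d i • br (Fin.append a e i) (Fin.append b g i) := by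
    rw [Fin.sum_univ_add]
    simp only [Fin.append_left, Fin.append_right]
    rw [hU, hV]
  have hval : min (univ.inf' univ_nonempty fun i => min (C (a i)) (q (b i)))
        (univ.inf' univ_nonempty fun j => min (D (e j)) (q (g j)))
      ≤ univ.inf' univ_nonempty (fun i : Fin ((n+1)+(m+1)) =>
          min (supDecomp C D (Fin.append a e i)) (q (Fin.append b g i))) := by
    apply Finset.le_inf'
    intro i _
    induction i using Fin.addCases with
    | left j =>
        rw [Fin.append_left, Fin.append_left]
        refine le_trans (min_le_left _ _)
          (le_trans (Finset.inf'_le _ (Finset.mem_univ j)) ?_)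
        exact min_le_min (le_supDecomp_left hC hD hD0 _) le_rfl
    | right j =>
        rw [Fin.append_right, Fin.append_right]
        refine le_trans (min_le_right _ _)
          (le_trans (Finset.inf'_le _ (Finset.mem_univ j)) ?_)
        exact min_le_min (le_supDecomp_right hC hD hC0 _) le_rfl
  refine ⟨univ.inf' univ_nonempty (fun i : Fin ((n+1)+(m+1)) =>
      min (supDecomp C D (Fin.append a e i)) (q (Fin.append b g i))), ?_, hval⟩
  exact ⟨n + 1 + m, (Fin.append c d : Fin ((n+1)+(m+1)) → K),
    (Fin.append a e : Fin ((n+1)+(m+1)) → W),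
    (Fin.append b g : Fin ((n+1)+(m+1)) → W), hsum, rfl⟩

lemma exists_concat_infDecomp {C D q : W → ℝ} (hC : B01 C) (hD : B01 D)
    (hC0 : C 0 = 0) (hD0 : D 0 = 0) {U V : W} {s s' : ℝ}
    (hs : s ∈ bracketRepMax K br C q U) (hs' : s' ∈ bracketRepMax K br D q V) :
    ∃ r ∈ bracketRepMax K br (infDecomp C D) q (U + V), r ≤ max s s' := by
  obtain ⟨n, c, a, b, hU, rfl⟩ := hs
  obtain ⟨m, d, e, g, hV, rfl⟩ := hs'
  haveI : Nonempty (Fin ((n+1)+(m+1))) := ⟨⟨0, by omega⟩⟩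
  have hsum : U + V = ∑ i : Fin ((n+1)+(m+1)),
      Fin.append c d i • br (Fin.append a e i) (Fin.append b g i) := by
    rw [Fin.sum_univ_add]
    simp only [Fin.append_left, Fin.append_right]
    rw [hU, hV]
  have hval : (univ.sup' univ_nonempty (fun i : Fin ((n+1)+(m+1)) =>
          max (infDecomp C D (Fin.append a e i)) (q (Fin.append b g i))))
      ≤ max (univ.sup' univ_nonempty fun i => max (C (a i)) (q (b i)))
        (univ.sup' univ_nonempty fun j => max (D (e j)) (q (g j))) := by
    apply Finset.sup'_le
    intro i _
    induction i using Fin.addCases with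
    | left j =>
        rw [Fin.append_left, Fin.append_left]
        refine le_trans ?_ (le_trans (Finset.le_sup' _ (Finset.mem_univ j)) (le_max_left _ _))
        exact max_le_max (infDecomp_le_left hC hD hD0 _) le_rfl
    | right j =>
        rw [Fin.append_right, Fin.append_right]
        refine le_trans ?_ (le_trans (Finset.le_sup' _ (Finset.mem_univ j)) (le_max_right _ _))
        exact max_le_max (infDecomp_le_right hC hD hC0 _) le_rfl
  refine ⟨univ.sup' univ_nonempty (fun i : Fin ((n+1)+(m+1)) =>
      max (infDecomp C D (Fin.append a e i)) (q (Fin.append b g i))), ?_, hval⟩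
  exact ⟨n + 1 + m, (Fin.append c d : Fin ((n+1)+(m+1)) → K),
    (Fin.append a e : Fin ((n+1)+(m+1)) → W),
    (Fin.append b g : Fin ((n+1)+(m+1)) → W), hsum, rfl⟩
lemma BSup_supDecomp (hadd : ∀ x y z : W, br (x + y) z = br x z + br y z)
    {C D q : W → ℝ} (hC : B01 C) (hD : B01 D) (hq : B01 q)
    (hC0 : C 0 = 1) (hD0 : D 0 = 1) (x : W) :
    BSup K br (supDecomp C D) q x = supDecomp (BSup K br C q) (BSup K br D q) x := by
  have hSD : B01 (supDecomp C D) := B01_supDecomp hC hD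
  have hBC : B01 (BSup K br C q) := B01_BSup K hC hq
  have hBD : B01 (BSup K br D q) := B01_BSup K hD hq
  apply le_antisymm
  · apply csSup_le (Set.insert_nonempty _ _)
    rintro t (rfl | ⟨n, c, a, b, hx, rfl⟩)
    · exact supDecomp_nonneg hBC hBD x
    · apply le_of_forall_pos_le_add
      intro ε hε
      set m := univ.inf' univ_nonempty fun j => min (supDecomp C D (a j)) (q (b j)) with hm
      by_cases hcase : ∀ i : Fin (n+1), ∃ u v : W, a i = u + v ∧ m - ε < min (C u) (D v)
      · choose u v huv hmin using hcase
        have hx2 : x = (∑ i, c i • br (u i) (b i)) + (∑ i, c i • br (v i) (b i)) := by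
          rw [hx, ← Finset.sum_add_distrib]
          refine Finset.sum_congr rfl fun i _ => ?_
          rw [huv i, hadd, smul_add]
        have h1 : m - ε ≤ BSup K br C q (∑ i, c i • br (u i) (b i)) := by
          refine le_trans ?_ (le_BSup K hq ⟨n, c, u, b, rfl, rfl⟩)
          refine Finset.le_inf' _ _ fun i _ => le_min ?_ ?_
          · exact le_of_lt (lt_of_lt_of_le (hmin i) (min_le_left _ _))
          · have h : m ≤ q (b i) := by
              rw [hm]
              exact le_trans (Finset.inf'_le (fun j => min (supDecomp C D (a j)) (q (b j)))
                (Finset.mem_univ i)) (min_le_right _ _)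
            linarith
        have h2 : m - ε ≤ BSup K br D q (∑ i, c i • br (v i) (b i)) := by
          refine le_trans ?_ (le_BSup K hq ⟨n, c, v, b, rfl, rfl⟩)
          refine Finset.le_inf' _ _ fun i _ => le_min ?_ ?_
          · exact le_of_lt (lt_of_lt_of_le (hmin i) (min_le_right _ _))
          · have h : m ≤ q (b i) := by
              rw [hm]
              exact le_trans (Finset.inf'_le (fun j => min (supDecomp C D (a j)) (q (b j)))
                (Finset.mem_univ i)) (min_le_right _ _)
            linarith
        have hle := le_supDecomp hBC hBD hx2
        have h3 := le_min h1 h2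
        linarith
      · push_neg at hcase
        obtain ⟨i, hi⟩ := hcase
        have hm_le : m ≤ supDecomp C D (a i) := by
          rw [hm]
          exact le_trans (Finset.inf'_le (fun j => min (supDecomp C D (a j)) (q (b j)))
            (Finset.mem_univ i)) (min_le_left _ _)
        have hsd : supDecomp C D (a i) ≤ max 0 (m - ε) := by
          apply csSup_le (Set.insert_nonempty _ _)
          rintro s (rfl | ⟨aa, bb, hab, rfl⟩)
          · exact le_max_left _ _
          · exact le_trans (hi aa bb hab) (le_max_right _ _)
        have h0 : 0 ≤ supDecomp (BSup K br C q) (BSup K br D q) x :=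
          supDecomp_nonneg hBC hBD x
        rcases le_max_iff.mp (le_trans hm_le hsd) with h | h
        · linarith
        · linarith
  · apply csSup_le (Set.insert_nonempty _ _)
    rintro t (rfl | ⟨U, V, hxUV, rfl⟩)
    · exact BSup_nonneg K hSD hq x
    · apply le_of_forall_pos_le_add
      intro ε hε
      have h0 : 0 ≤ BSup K br (supDecomp C D) q x := BSup_nonneg K hSD hq x
      obtain ⟨s, hs, hsgt⟩ := near_BSup K (br := br) (p := C) (q := q) U hε
      rcases hs with rfl | hsmem
      · have := min_le_left (BSup K br C q U) (BSup K br D q V)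
        linarith
      · obtain ⟨s', hs', hs'gt⟩ := near_BSup K (br := br) (p := D) (q := q) V hε
        rcases hs' with rfl | hs'mem
        · have := min_le_right (BSup K br C q U) (BSup K br D q V)
          linarith
        · obtain ⟨r, hrmem, hrge⟩ := exists_concat_supDecomp K hC hD hC0 hD0 hsmem hs'mem
          have hr_le : r ≤ BSup K br (supDecomp C D) q x := by
            rw [hxUV]
            exact le_BSup K hq hrmem
          have hA := min_le_left (BSup K br C q U) (BSup K br D q V)
          have hB := min_le_right (BSup K br C q U) (BSup K br D q V)
          have hmin : min (BSup K br C q U) (BSup K br D q V) - ε ≤ min s s' :=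
            le_min (by linarith) (by linarith)
          linarith [le_trans hmin hrge]

lemma BInf_infDecomp (hadd : ∀ x y z : W, br (x + y) z = br x z + br y z)
    {C D q : W → ℝ} (hC : B01 C) (hD : B01 D) (hq : B01 q)
    (hC0 : C 0 = 0) (hD0 : D 0 = 0) (x : W) :
    BInf K br (infDecomp C D) q x = infDecomp (BInf K br C q) (BInf K br D q) x := by
  have hSD : B01 (infDecomp C D) := B01_infDecomp hC hD
  have hBC : B01 (BInf K br C q) := B01_BInf K hC hq
  have hBD : B01 (BInf K br D q) := B01_BInf K hD hq
  apply le_antisymm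
  · -- BInf (infDecomp C D) q x ≤ infDecomp (BInf C q) (BInf D q) x
    apply le_csInf (Set.insert_nonempty _ _)
    rintro t (rfl | ⟨U, V, hxUV, rfl⟩)
    · exact BInf_le_one K hq x
    · apply le_of_forall_pos_le_add
      intro ε hε
      have h1 : BInf K br (infDecomp C D) q x ≤ 1 := BInf_le_one K hq x
      obtain ⟨s, hs, hslt⟩ := near_BInf K (br := br) (p := C) (q := q) U hε
      rcases hs with rfl | hsmem
      · have := le_max_left (BInf K br C q U) (BInf K br D q V)
        linarith
      · obtain ⟨s', hs', hs'lt⟩ := near_BInf K (br := br) (p := D) (q := q) V hε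
        rcases hs' with rfl | hs'mem
        · have := le_max_right (BInf K br C q U) (BInf K br D q V)
          linarith
        · obtain ⟨r, hrmem, hrle⟩ := exists_concat_infDecomp K hC hD hC0 hD0 hsmem hs'mem
          have hr_ge : BInf K br (infDecomp C D) q x ≤ r := by
            rw [hxUV]
            exact BInf_le K hq hrmem
          have hA := le_max_left (BInf K br C q U) (BInf K br D q V)
          have hB := le_max_right (BInf K br C q U) (BInf K br D q V)
          have hmax : max s s' ≤ max (BInf K br C q U) (BInf K br D q V) + ε :=
            max_le (by linarith) (by linarith)
          linarith [le_trans hrle hmax]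
  · -- infDecomp (BInf C q) (BInf D q) x ≤ BInf (infDecomp C D) q x
    apply le_csInf (Set.insert_nonempty _ _)
    rintro t (rfl | ⟨n, c, a, b, hx, rfl⟩)
    · exact infDecomp_le_one hBC hBD x
    · apply le_of_forall_pos_le_add
      intro ε hε
      set m := univ.sup' univ_nonempty fun j => max (infDecomp C D (a j)) (q (b j)) with hm
      by_cases hcase : ∀ i : Fin (n+1), ∃ u v : W, a i = u + v ∧ max (C u) (D v) < m + ε
      · choose u v huv hmax using hcase
        have hx2 : x = (∑ i, c i • br (u i) (b i)) + (∑ i, c i • br (v i) (b i)) := by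
          rw [hx, ← Finset.sum_add_distrib]
          refine Finset.sum_congr rfl fun i _ => ?_
          rw [huv i, hadd, smul_add]
        have h1 : BInf K br C q (∑ i, c i • br (u i) (b i)) ≤ m + ε := by
          refine le_trans (BInf_le K hq ⟨n, c, u, b, rfl, rfl⟩) ?_
          refine Finset.sup'_le _ _ fun i _ => max_le ?_ ?_
          · exact le_of_lt (lt_of_le_of_lt (le_max_left _ _) (hmax i))
          · have h : q (b i) ≤ m := by
              rw [hm]
              exact le_trans (le_max_right (infDecomp C D (a i)) (q (b i)))
                (Finset.le_sup' (fun j => max (infDecomp C D (a j)) (q (b j)))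
                  (Finset.mem_univ i))
            linarith
        have h2 : BInf K br D q (∑ i, c i • br (v i) (b i)) ≤ m + ε := by
          refine le_trans (BInf_le K hq ⟨n, c, v, b, rfl, rfl⟩) ?_
          refine Finset.sup'_le _ _ fun i _ => max_le ?_ ?_
          · exact le_of_lt (lt_of_le_of_lt (le_max_right _ _) (hmax i))
          · have h : q (b i) ≤ m := by
              rw [hm]
              exact le_trans (le_max_right (infDecomp C D (a i)) (q (b i)))
                (Finset.le_sup' (fun j => max (infDecomp C D (a j)) (q (b j)))
                  (Finset.mem_univ i))
            linarith
        have hle := infDecomp_le hBC hBD hx2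
        have h3 := max_le h1 h2
        linarith
      · push_neg at hcase
        obtain ⟨i, hi⟩ := hcase
        have hm_ge : infDecomp C D (a i) ≤ m := by
          rw [hm]
          exact le_trans (le_max_left _ (q (b i)))
            (Finset.le_sup' (fun j => max (infDecomp C D (a j)) (q (b j))) (Finset.mem_univ i))
        have hsd : min 1 (m + ε) ≤ infDecomp C D (a i) := by
          apply le_csInf (Set.insert_nonempty _ _)
          rintro s (rfl | ⟨aa, bb, hab, rfl⟩)
          · exact min_le_left _ _
          · exact le_trans (min_le_right _ _) (hi aa bb hab)
        have h0 : infDecomp (BInf K br C q) (BInf K br D q) x ≤ 1 :=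
          infDecomp_le_one hBC hBD x
        rcases le_total (1:ℝ) (m + ε) with h | h
        · have hh := le_trans hsd hm_ge
          rw [min_eq_left h] at hh
          linarith
        · have hh := le_trans hsd hm_ge
          rw [min_eq_right h] at hh
          linarith
open Classical in
/-- `r`/`w`-style component of `smulCIF`. -/
noncomputable def smf (α : K) (p : W → ℝ) : W → ℝ :=
  fun z => if α = 0 then (if z = 0 then 1 else 0) else p (α⁻¹ • z)

open Classical in
/-- `r̂`/`ω̂`-style component of `smulCIF`. -/
noncomputable def smfh (α : K) (p : W → ℝ) : W → ℝ :=
  fun z => if α = 0 then (if z = 0 then 0 else 1) else p (α⁻¹ • z)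

lemma smulCIF_r' (α : K) (A : CIFSet W) : (CIFSet.smulCIF α A).r = smf K α A.r := rfl
lemma smulCIF_w' (α : K) (A : CIFSet W) : (CIFSet.smulCIF α A).w = smf K α A.w := rfl
lemma smulCIF_rhat' (α : K) (A : CIFSet W) :
    (CIFSet.smulCIF α A).rhat = smfh K α A.rhat := rfl
lemma smulCIF_what' (α : K) (A : CIFSet W) :
    (CIFSet.smulCIF α A).what = smfh K α A.what := rfl

lemma B01_smf {p : W → ℝ} (hp : B01 p) (α : K) : B01 (smf K α p) := by
  intro z
  simp only [smf]
  split_ifs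
  · exact ⟨zero_le_one, le_rfl⟩
  · exact ⟨le_rfl, zero_le_one⟩
  · exact hp _

lemma B01_smfh {p : W → ℝ} (hp : B01 p) (α : K) : B01 (smfh K α p) := by
  intro z
  simp only [smfh]
  split_ifs
  · exact ⟨le_rfl, zero_le_one⟩
  · exact ⟨zero_le_one, le_rfl⟩
  · exact hp _

lemma smf_zero {p : W → ℝ} (hp0 : p 0 = 1) (α : K) : smf K α p 0 = 1 := by
  simp only [smf]
  split_ifs with h
  · rfl
  · rw [smul_zero, hp0]

lemma smfh_zero {p : W → ℝ} (hp0 : p 0 = 0) (α : K) : smfh K α p 0 = 0 := by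
  simp only [smfh]
  split_ifs with h
  · rfl
  · rw [smul_zero, hp0]

lemma BSup_smf (hadd : ∀ x y z : W, br (x + y) z = br x z + br y z)
    (hsmul : ∀ (c : K) (x y : W), br (c • x) y = c • br x y)
    {p q : W → ℝ} (hq : B01 q) (hq0 : q 0 = 1) (α : K) :
    BSup K br (smf K α p) q = smf K α (BSup K br p q) := by
  classical
  have hbr0 : ∀ y : W, br 0 y = 0 := by
    intro y
    have h := hadd 0 0 y
    rw [add_zero] at h
    have h2 : br 0 y + br 0 y = br 0 y + 0 := by rw [add_zero]; exact h.symm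
    exact add_left_cancel h2
  funext x
  rcases eq_or_ne α 0 with rfl | hα
  · have hδ : smf K (0:K) p = fun z : W => if z = 0 then (1:ℝ) else 0 := by
      funext z; simp [smf]
    have hδ01 : B01 (fun z : W => if z = 0 then (1:ℝ) else 0) := by
      intro z; dsimp only; split_ifs
      · exact ⟨zero_le_one, le_rfl⟩
      · exact ⟨le_rfl, zero_le_one⟩
    have hR : smf K (0:K) (BSup K br p q) x = if x = 0 then (1:ℝ) else 0 := by
      simp [smf]
    rw [hδ, hR]
    rcases eq_or_ne x 0 with rfl | hx
    · rw [if_pos rfl]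
      apply le_antisymm (BSup_le_one K hq 0)
      have hmem : (1:ℝ) ∈ bracketRepMin K br (fun z : W => if z = 0 then (1:ℝ) else 0) q 0 := by
        refine ⟨0, fun _ => 0, fun _ => 0, fun _ => 0, by simp, ?_⟩
        simp [hq0]
      exact le_BSup K hq hmem
    · rw [if_neg hx]
      apply le_antisymm
      · apply csSup_le (Set.insert_nonempty _ _)
        rintro t (rfl | ⟨n, c, a, b, hxx, rfl⟩)
        · exact le_rfl
        · have hex : ∃ i, a i ≠ 0 := by
            by_contra hcon
            push_neg at hcon
            apply hx
            rw [hxx]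
            refine Finset.sum_eq_zero fun i _ => ?_
            rw [hcon i, hbr0, smul_zero]
          obtain ⟨i, hi⟩ := hex
          refine le_trans (Finset.inf'_le _ (Finset.mem_univ i)) ?_
          exact le_trans (min_le_left _ _) (le_of_eq (if_neg hi))
      · exact BSup_nonneg K hδ01 hq x
  · have h1 : smf K α p = fun z => p (α⁻¹ • z) := by
      funext z; simp [smf, hα]
    have h2 : smf K α (BSup K br p q) x = BSup K br p q (α⁻¹ • x) := by
      simp [smf, hα]
    rw [h1, h2]
    have hset : bracketRepMin K br (fun z => p (α⁻¹ • z)) q x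
        = bracketRepMin K br p q (α⁻¹ • x) := by
      ext t
      constructor
      · rintro ⟨n, c, a, b, hxx, rfl⟩
        refine ⟨n, c, fun i => α⁻¹ • a i, b, ?_, rfl⟩
        rw [hxx, Finset.smul_sum]
        refine Finset.sum_congr rfl fun i _ => ?_
        rw [hsmul]
        exact smul_comm _ _ _
      · rintro ⟨n, c, a, b, hxx, rfl⟩
        refine ⟨n, c, fun i => α • a i, b, ?_, ?_⟩
        · have hxa : x = α • (α⁻¹ • x) := (smul_inv_smul₀ hα x).symm
          rw [hxa, hxx, Finset.smul_sum]
          refine Finset.sum_congr rfl fun i _ => ?_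
          rw [hsmul]
          exact smul_comm _ _ _
        · refine congrArg _ (funext fun i => ?_)
          simp only [inv_smul_smul₀ hα]
    show sSup (insert 0 (bracketRepMin K br (fun z => p (α⁻¹ • z)) q x)) = _
    rw [hset]
    rfl

lemma BInf_smfh (hadd : ∀ x y z : W, br (x + y) z = br x z + br y z)
    (hsmul : ∀ (c : K) (x y : W), br (c • x) y = c • br x y)
    {p q : W → ℝ} (hq : B01 q) (hq0 : q 0 = 0) (α : K) :
    BInf K br (smfh K α p) q = smfh K α (BInf K br p q) := by
  classical
  have hbr0 : ∀ y : W, br 0 y = 0 := by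
    intro y
    have h := hadd 0 0 y
    rw [add_zero] at h
    have h2 : br 0 y + br 0 y = br 0 y + 0 := by rw [add_zero]; exact h.symm
    exact add_left_cancel h2
  funext x
  rcases eq_or_ne α 0 with rfl | hα
  · have hδ : smfh K (0:K) p = fun z : W => if z = 0 then (0:ℝ) else 1 := by
      funext z; simp [smfh]
    have hR : smfh K (0:K) (BInf K br p q) x = if x = 0 then (0:ℝ) else 1 := by
      simp [smfh]
    rw [hδ, hR]
    rcases eq_or_ne x 0 with rfl | hx
    · rw [if_pos rfl]
      apply le_antisymm ?_ (BInf_nonneg K hq 0)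
      have hmem : (0:ℝ) ∈ bracketRepMax K br (fun z : W => if z = 0 then (0:ℝ) else 1) q 0 := by
        refine ⟨0, fun _ => 0, fun _ => 0, fun _ => 0, by simp, ?_⟩
        simp [hq0]
      exact BInf_le K hq hmem
    · rw [if_neg hx]
      apply le_antisymm (BInf_le_one K hq x)
      apply le_csInf (Set.insert_nonempty _ _)
      rintro t (rfl | ⟨n, c, a, b, hxx, rfl⟩)
      · exact le_rfl
      · have hex : ∃ i, a i ≠ 0 := by
          by_contra hcon
          push_neg at hcon
          apply hx
          rw [hxx]
          refine Finset.sum_eq_zero fun i _ => ?_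
          rw [hcon i, hbr0, smul_zero]
        obtain ⟨i, hi⟩ := hex
        refine le_trans ?_ (Finset.le_sup' _ (Finset.mem_univ i))
        exact le_trans (le_of_eq (if_neg hi).symm) (le_max_left _ _)
  · have h1 : smfh K α p = fun z => p (α⁻¹ • z) := by
      funext z; simp [smfh, hα]
    have h2 : smfh K α (BInf K br p q) x = BInf K br p q (α⁻¹ • x) := by
      simp [smfh, hα]
    rw [h1, h2]
    have hset : bracketRepMax K br (fun z => p (α⁻¹ • z)) q x
        = bracketRepMax K br p q (α⁻¹ • x) := by
      ext t
      constructor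
      · rintro ⟨n, c, a, b, hxx, rfl⟩
        refine ⟨n, c, fun i => α⁻¹ • a i, b, ?_, rfl⟩
        rw [hxx, Finset.smul_sum]
        refine Finset.sum_congr rfl fun i _ => ?_
        rw [hsmul]
        exact smul_comm _ _ _
      · rintro ⟨n, c, a, b, hxx, rfl⟩
        refine ⟨n, c, fun i => α • a i, b, ?_, ?_⟩
        · have hxa : x = α • (α⁻¹ • x) := (smul_inv_smul₀ hα x).symm
          rw [hxa, hxx, Finset.smul_sum]
          refine Finset.sum_congr rfl fun i _ => ?_
          rw [hsmul]
          exact smul_comm _ _ _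
        · refine congrArg _ (funext fun i => ?_)
          simp only [inv_smul_smul₀ hα]
    show sInf (insert 1 (bracketRepMax K br (fun z => p (α⁻¹ • z)) q x)) = _
    rw [hset]
    rfl
lemma bracketRepMin_flip (p q : W → ℝ) (x : W) :
    bracketRepMin K br p q x = bracketRepMin K (fun u v => br v u) q p x := by
  ext t
  constructor
  · rintro ⟨n, c, a, b, hx, rfl⟩
    exact ⟨n, c, b, a, hx, congrArg _ (funext fun i => min_comm _ _)⟩
  · rintro ⟨n, c, a, b, hx, rfl⟩
    exact ⟨n, c, b, a, hx, congrArg _ (funext fun i => min_comm _ _)⟩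

lemma bracketRepMax_flip (p q : W → ℝ) (x : W) :
    bracketRepMax K br p q x = bracketRepMax K (fun u v => br v u) q p x := by
  ext t
  constructor
  · rintro ⟨n, c, a, b, hx, rfl⟩
    exact ⟨n, c, b, a, hx, congrArg _ (funext fun i => max_comm _ _)⟩
  · rintro ⟨n, c, a, b, hx, rfl⟩
    exact ⟨n, c, b, a, hx, congrArg _ (funext fun i => max_comm _ _)⟩

lemma bracket_flip (A B : CIFSet W) :
    CIFSet.bracket K br A B = CIFSet.bracket K (fun u v => br v u) B A := by
  refine CIFSet.ext4 ?_ ?_ ?_ ?_ <;> funext x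
  · show sSup (insert 0 (bracketRepMin K br A.r B.r x)) = _
    rw [bracketRepMin_flip]
    rfl
  · show sSup (insert 0 (bracketRepMin K br A.w B.w x)) = _
    rw [bracketRepMin_flip]
    rfl
  · show sInf (insert 1 (bracketRepMax K br A.rhat B.rhat x)) = _
    rw [bracketRepMax_flip]
    rfl
  · show sInf (insert 1 (bracketRepMax K br A.what B.what x)) = _
    rw [bracketRepMax_flip]
    rfl

/-- `B01` for all four components. -/
def Good01 (P : CIFSet W) : Prop := B01 P.r ∧ B01 P.w ∧ B01 P.rhat ∧ B01 P.what

/-- Normalized values at `0`. -/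
def One0 (P : CIFSet W) : Prop := P.r 0 = 1 ∧ P.w 0 = 1 ∧ P.rhat 0 = 0 ∧ P.what 0 = 0

lemma Good01_smulCIF {P : CIFSet W} (hP : Good01 P) (α : K) :
    Good01 (CIFSet.smulCIF α P) :=
  ⟨by rw [smulCIF_r']; exact B01_smf K hP.1 α,
   by rw [smulCIF_w']; exact B01_smf K hP.2.1 α,
   by rw [smulCIF_rhat']; exact B01_smfh K hP.2.2.1 α,
   by rw [smulCIF_what']; exact B01_smfh K hP.2.2.2 α⟩

lemma Good01_bracket {A B : CIFSet W} (hA : Good01 A) (hB : Good01 B) :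
    Good01 (CIFSet.bracket K br A B) :=
  ⟨by rw [bracket_r']; exact B01_BSup K hA.1 hB.1,
   by rw [bracket_w']; exact B01_BSup K hA.2.1 hB.2.1,
   by rw [bracket_rhat']; exact B01_BInf K hA.2.2.1 hB.2.2.1,
   by rw [bracket_what']; exact B01_BInf K hA.2.2.2 hB.2.2.2⟩

lemma bracket_sum_smul_left
    (hadd : ∀ x y z : W, br (x + y) z = br x z + br y z)
    (hsmul : ∀ (c : K) (x y : W), br (c • x) y = c • br x y)
    (P Q R : CIFSet W) (hP : Good01 P) (hQ : Good01 Q) (hR : Good01 R)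
    (hP0 : One0 P) (hQ0 : One0 Q) (hR0 : One0 R) (α β : K) :
    CIFSet.bracket K br ((CIFSet.smulCIF α P).sum (CIFSet.smulCIF β Q)) R
      = (CIFSet.smulCIF α (CIFSet.bracket K br P R)).sum
          (CIFSet.smulCIF β (CIFSet.bracket K br Q R)) := by
  obtain ⟨hP1, hP2, hP3, hP4⟩ := hP
  obtain ⟨hQ1, hQ2, hQ3, hQ4⟩ := hQ
  obtain ⟨hR1, hR2, hR3, hR4⟩ := hR
  obtain ⟨hP01, hP02, hP03, hP04⟩ := hP0
  obtain ⟨hQ01, hQ02, hQ03, hQ04⟩ := hQ0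
  obtain ⟨hR01, hR02, hR03, hR04⟩ := hR0
  refine CIFSet.ext4 ?_ ?_ ?_ ?_
  · show BSup K br ((CIFSet.smulCIF α P).sum (CIFSet.smulCIF β Q)).r R.r
      = ((CIFSet.smulCIF α (CIFSet.bracket K br P R)).sum
          (CIFSet.smulCIF β (CIFSet.bracket K br Q R))).r
    rw [sum_r', sum_r', smulCIF_r', smulCIF_r', smulCIF_r', smulCIF_r',
      bracket_r', bracket_r']
    funext x
    rw [BSup_supDecomp K hadd (B01_smf K hP1 α) (B01_smf K hQ1 β) hR1
      (smf_zero K hP01 α) (smf_zero K hQ01 β) x,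
      BSup_smf K hadd hsmul hR1 hR01 α, BSup_smf K hadd hsmul hR1 hR01 β]
  · show BSup K br ((CIFSet.smulCIF α P).sum (CIFSet.smulCIF β Q)).w R.w
      = ((CIFSet.smulCIF α (CIFSet.bracket K br P R)).sum
          (CIFSet.smulCIF β (CIFSet.bracket K br Q R))).w
    rw [sum_w', sum_w', smulCIF_w', smulCIF_w', smulCIF_w', smulCIF_w',
      bracket_w', bracket_w']
    funext x
    rw [BSup_supDecomp K hadd (B01_smf K hP2 α) (B01_smf K hQ2 β) hR2
      (smf_zero K hP02 α) (smf_zero K hQ02 β) x,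
      BSup_smf K hadd hsmul hR2 hR02 α, BSup_smf K hadd hsmul hR2 hR02 β]
  · show BInf K br ((CIFSet.smulCIF α P).sum (CIFSet.smulCIF β Q)).rhat R.rhat
      = ((CIFSet.smulCIF α (CIFSet.bracket K br P R)).sum
          (CIFSet.smulCIF β (CIFSet.bracket K br Q R))).rhat
    rw [sum_rhat', sum_rhat', smulCIF_rhat', smulCIF_rhat', smulCIF_rhat', smulCIF_rhat',
      bracket_rhat', bracket_rhat']
    funext x
    rw [BInf_infDecomp K hadd (B01_smfh K hP3 α) (B01_smfh K hQ3 β) hR3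
      (smfh_zero K hP03 α) (smfh_zero K hQ03 β) x,
      BInf_smfh K hadd hsmul hR3 hR03 α, BInf_smfh K hadd hsmul hR3 hR03 β]
  · show BInf K br ((CIFSet.smulCIF α P).sum (CIFSet.smulCIF β Q)).what R.what
      = ((CIFSet.smulCIF α (CIFSet.bracket K br P R)).sum
          (CIFSet.smulCIF β (CIFSet.bracket K br Q R))).what
    rw [sum_what', sum_what', smulCIF_what', smulCIF_what', smulCIF_what', smulCIF_what',
      bracket_what', bracket_what']
    funext x
    rw [BInf_infDecomp K hadd (B01_smfh K hP4 α) (B01_smfh K hQ4 β) hR4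
      (smfh_zero K hP04 α) (smfh_zero K hQ04 β) x,
      BInf_smfh K hadd hsmul hR4 hR04 α, BInf_smfh K hadd hsmul hR4 hR04 β]

lemma bracket_sum_smul_right
    (hadd : ∀ x y z : W, br x (y + z) = br x y + br x z)
    (hsmul : ∀ (c : K) (x y : W), br x (c • y) = c • br x y)
    (P Q R : CIFSet W) (hP : Good01 P) (hQ : Good01 Q) (hR : Good01 R)
    (hP0 : One0 P) (hQ0 : One0 Q) (hR0 : One0 R) (α β : K) :
    CIFSet.bracket K br R ((CIFSet.smulCIF α P).sum (CIFSet.smulCIF β Q))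
      = (CIFSet.smulCIF α (CIFSet.bracket K br R P)).sum
          (CIFSet.smulCIF β (CIFSet.bracket K br R Q)) := by
  rw [bracket_flip K (br := br) R ((CIFSet.smulCIF α P).sum (CIFSet.smulCIF β Q)),
    bracket_flip K (br := br) R P, bracket_flip K (br := br) R Q]
  exact bracket_sum_smul_left K (br := fun u v => br v u)
    (fun x y z => hadd z x y) (fun c x y => hsmul c y x) P Q R hP hQ hR hP0 hQ0 hR0 α β
end Bracket

section Image

variable {K : Type*} [Field K] {V : Type*} [AddCommGroup V] [Module K V]
  {W : Type*} [AddCommGroup W] [Module K W] (f : V → W)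

/-- `r`/`w`-style component of the image. -/
noncomputable def imS (p : V → ℝ) : W → ℝ := fun y => sSup {t | ∃ x, f x = y ∧ t = p x}

/-- `r̂`/`ω̂`-style component of the image. -/
noncomputable def imI (p : V → ℝ) : W → ℝ := fun y => sInf {t | ∃ x, f x = y ∧ t = p x}

lemma image_r' (hsurj : Function.Surjective f) (A : CIFSet V) : (CIFSet.image f A).r = imS f A.r := by
  funext y
  simp only [CIFSet.image, imS]
  rw [if_pos (Set.mem_range.mpr (hsurj y))]

lemma image_w' (hsurj : Function.Surjective f) (A : CIFSet V) : (CIFSet.image f A).w = imS f A.w := by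
  funext y
  simp only [CIFSet.image, imS]
  rw [if_pos (Set.mem_range.mpr (hsurj y))]

lemma image_rhat' (hsurj : Function.Surjective f) (A : CIFSet V) : (CIFSet.image f A).rhat = imI f A.rhat := by
  funext y
  simp only [CIFSet.image, imI]
  rw [if_pos (Set.mem_range.mpr (hsurj y))]

lemma image_what' (hsurj : Function.Surjective f) (A : CIFSet V) : (CIFSet.image f A).what = imI f A.what := by
  funext y
  simp only [CIFSet.image, imI]
  rw [if_pos (Set.mem_range.mpr (hsurj y))]

lemma B01_imS (hsurj : Function.Surjective f) {p : V → ℝ} (hp : B01 p) : B01 (imS f p) := by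
  intro y
  obtain ⟨x0, hx0⟩ := hsurj y
  constructor
  · exact Real.sSup_nonneg (by rintro t ⟨x, hx, rfl⟩; exact (hp x).1)
  · exact csSup_le ⟨p x0, x0, hx0, rfl⟩ (by rintro t ⟨x, hx, rfl⟩; exact (hp x).2)

lemma B01_imI (hsurj : Function.Surjective f) {p : V → ℝ} (hp : B01 p) : B01 (imI f p) := by
  intro y
  obtain ⟨x0, hx0⟩ := hsurj y
  constructor
  · exact Real.sInf_nonneg (by rintro t ⟨x, hx, rfl⟩; exact (hp x).1)
  · exact le_trans (csInf_le (bddBelow_of_nonneg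
      (by rintro t ⟨x, hx, rfl⟩; exact (hp x).1)) ⟨x0, hx0, rfl⟩) (hp x0).2

lemma imS_zero (hsurj : Function.Surjective f) {p : V → ℝ} (hp : B01 p) (hp0 : p 0 = 1) (hf0 : f 0 = 0) :
    imS f p 0 = 1 :=
  le_antisymm (csSup_le ⟨1, 0, hf0, hp0.symm⟩ (by rintro t ⟨x, hx, rfl⟩; exact (hp x).2))
    (le_csSup (bddAbove_of_le_one (by rintro t ⟨x, hx, rfl⟩; exact (hp x).2))
      ⟨0, hf0, hp0.symm⟩)

lemma imI_zero (hsurj : Function.Surjective f) {p : V → ℝ} (hp : B01 p) (hp0 : p 0 = 0) (hf0 : f 0 = 0) :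
    imI f p 0 = 0 :=
  le_antisymm (csInf_le (bddBelow_of_nonneg (by rintro t ⟨x, hx, rfl⟩; exact (hp x).1))
      ⟨0, hf0, hp0.symm⟩)
    (Real.sInf_nonneg (by rintro t ⟨x, hx, rfl⟩; exact (hp x).1))

lemma imS_supDecomp (hsurj : Function.Surjective f) (hadd_f : ∀ x y : V, f (x + y) = f x + f y)
    {C D : V → ℝ} (hC : B01 C) (hD : B01 D) (y : W) :
    imS f (supDecomp C D) y = supDecomp (imS f C) (imS f D) y := by
  have hIC : B01 (imS f C) := B01_imS f hsurj hC
  have hID : B01 (imS f D) := B01_imS f hsurj hD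
  obtain ⟨x0, hx0⟩ := hsurj y
  apply le_antisymm
  · refine csSup_le ⟨supDecomp C D x0, x0, hx0, rfl⟩ ?_
    rintro t ⟨x, hx, rfl⟩
    apply csSup_le (Set.insert_nonempty _ _)
    rintro s (rfl | ⟨a, b, hab, rfl⟩)
    · exact supDecomp_nonneg hIC hID y
    · have h1 : C a ≤ imS f C (f a) :=
        le_csSup (bddAbove_of_le_one (by rintro t ⟨x', hx', rfl⟩; exact (hC x').2))
          ⟨a, rfl, rfl⟩
      have h2 : D b ≤ imS f D (f b) :=
        le_csSup (bddAbove_of_le_one (by rintro t ⟨x', hx', rfl⟩; exact (hD x').2))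
          ⟨b, rfl, rfl⟩
      refine le_trans (min_le_min h1 h2) (le_supDecomp hIC hID ?_)
      rw [← hx, hab, hadd_f]
  · apply csSup_le (Set.insert_nonempty _ _)
    rintro t (rfl | ⟨u, v, huv, rfl⟩)
    · exact Real.sSup_nonneg (by rintro t ⟨x, hx, rfl⟩; exact supDecomp_nonneg hC hD x)
    · apply le_of_forall_pos_le_add
      intro ε hε
      obtain ⟨a0, ha0⟩ := hsurj u
      obtain ⟨b0, hb0⟩ := hsurj v
      have hneC : {t | ∃ x, f x = u ∧ t = C x}.Nonempty := ⟨C a0, a0, ha0, rfl⟩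
      have hneD : {t | ∃ x, f x = v ∧ t = D x}.Nonempty := ⟨D b0, b0, hb0, rfl⟩
      have hltC : imS f C u - ε < sSup {t | ∃ x, f x = u ∧ t = C x} := by
        rw [show sSup {t | ∃ x, f x = u ∧ t = C x} = imS f C u from rfl]
        exact sub_lt_self _ hε
      have hltD : imS f D v - ε < sSup {t | ∃ x, f x = v ∧ t = D x} := by
        rw [show sSup {t | ∃ x, f x = v ∧ t = D x} = imS f D v from rfl]
        exact sub_lt_self _ hε
      obtain ⟨s, hsmem, hsgt⟩ := exists_lt_of_lt_csSup hneC hltC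
      obtain ⟨a, ha, rfl⟩ := hsmem
      obtain ⟨s', hs'mem, hs'gt⟩ := exists_lt_of_lt_csSup hneD hltD
      obtain ⟨b, hb, rfl⟩ := hs'mem
      have hfab : f (a + b) = y := by rw [hadd_f, ha, hb]; exact huv.symm
      have hfin : supDecomp C D (a + b) ≤ imS f (supDecomp C D) y :=
        le_csSup (bddAbove_of_le_one
          (by rintro t ⟨x', hx', rfl⟩; exact supDecomp_le_one hC hD x'))
          ⟨a + b, hfab, rfl⟩
      have hmin : min (C a) (D b) ≤ supDecomp C D (a + b) := le_supDecomp hC hD rfl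
      have hA := min_le_left (imS f C u) (imS f D v)
      have hB := min_le_right (imS f C u) (imS f D v)
      have hme : min (imS f C u) (imS f D v) - ε ≤ min (C a) (D b) :=
        le_min (by linarith) (by linarith)
      linarith

lemma imI_infDecomp (hsurj : Function.Surjective f) (hadd_f : ∀ x y : V, f (x + y) = f x + f y)
    {C D : V → ℝ} (hC : B01 C) (hD : B01 D) (y : W) :
    imI f (infDecomp C D) y = infDecomp (imI f C) (imI f D) y := by
  have hIC : B01 (imI f C) := B01_imI f hsurj hC
  have hID : B01 (imI f D) := B01_imI f hsurj hD
  obtain ⟨x0, hx0⟩ := hsurj y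
  apply le_antisymm
  · apply le_csInf (Set.insert_nonempty _ _)
    rintro t (rfl | ⟨u, v, huv, rfl⟩)
    · exact le_trans (csInf_le (bddBelow_of_nonneg
        (by rintro t ⟨x, hx, rfl⟩; exact infDecomp_nonneg hC hD x)) ⟨x0, hx0, rfl⟩)
        (infDecomp_le_one hC hD x0)
    · apply le_of_forall_pos_le_add
      intro ε hε
      obtain ⟨a0, ha0⟩ := hsurj u
      obtain ⟨b0, hb0⟩ := hsurj v
      have hneC : {t | ∃ x, f x = u ∧ t = C x}.Nonempty := ⟨C a0, a0, ha0, rfl⟩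
      have hneD : {t | ∃ x, f x = v ∧ t = D x}.Nonempty := ⟨D b0, b0, hb0, rfl⟩
      have hltC : sInf {t | ∃ x, f x = u ∧ t = C x} < imI f C u + ε := by
        rw [show sInf {t | ∃ x, f x = u ∧ t = C x} = imI f C u from rfl]
        exact lt_add_of_pos_right _ hε
      have hltD : sInf {t | ∃ x, f x = v ∧ t = D x} < imI f D v + ε := by
        rw [show sInf {t | ∃ x, f x = v ∧ t = D x} = imI f D v from rfl]
        exact lt_add_of_pos_right _ hε
      obtain ⟨s, hsmem, hsgt⟩ := exists_lt_of_csInf_lt hneC hltC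
      obtain ⟨a, ha, rfl⟩ := hsmem
      obtain ⟨s', hs'mem, hs'gt⟩ := exists_lt_of_csInf_lt hneD hltD
      obtain ⟨b, hb, rfl⟩ := hs'mem
      have hfab : f (a + b) = y := by rw [hadd_f, ha, hb]; exact huv.symm
      have hfin : imI f (infDecomp C D) y ≤ infDecomp C D (a + b) :=
        csInf_le (bddBelow_of_nonneg
          (by rintro t ⟨x', hx', rfl⟩; exact infDecomp_nonneg hC hD x'))
          ⟨a + b, hfab, rfl⟩
      have hmax : infDecomp C D (a + b) ≤ max (C a) (D b) := infDecomp_le hC hD rfl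
      have hA := le_max_left (imI f C u) (imI f D v)
      have hB := le_max_right (imI f C u) (imI f D v)
      have hme : max (C a) (D b) ≤ max (imI f C u) (imI f D v) + ε :=
        max_le (by linarith) (by linarith)
      linarith
  · refine le_csInf ⟨infDecomp C D x0, x0, hx0, rfl⟩ ?_
    rintro t ⟨x, hx, rfl⟩
    apply le_csInf (Set.insert_nonempty _ _)
    rintro s (rfl | ⟨a, b, hab, rfl⟩)
    · exact infDecomp_le_one hIC hID y
    · have h1 : imI f C (f a) ≤ C a :=
        csInf_le (bddBelow_of_nonneg (by rintro t ⟨x', hx', rfl⟩; exact (hC x').1))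
          ⟨a, rfl, rfl⟩
      have h2 : imI f D (f b) ≤ D b :=
        csInf_le (bddBelow_of_nonneg (by rintro t ⟨x', hx', rfl⟩; exact (hD x').1))
          ⟨b, rfl, rfl⟩
      refine le_trans (infDecomp_le hIC hID ?_) (max_le_max h1 h2)
      rw [← hx, hab, hadd_f]
lemma imS_smf (hsurj : Function.Surjective f) (hsmul_f : ∀ (c : K) (x : V), f (c • x) = c • f x)
    (p : V → ℝ) (α : K) (y : W) :
    imS f (smf K α p) y = smf K α (imS f p) y := by
  classical
  have hf0 : f 0 = 0 := by
    have h := hsmul_f 0 0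
    rwa [zero_smul, zero_smul] at h
  rcases eq_or_ne α 0 with rfl | hα
  · have hl : smf K (0:K) p = fun z : V => if z = 0 then (1:ℝ) else 0 := by
      funext z; simp [smf]
    have hr : smf K (0:K) (imS f p) y = if y = 0 then (1:ℝ) else 0 := by
      simp [smf]
    rw [hl, hr]
    rcases eq_or_ne y 0 with rfl | hy
    · rw [if_pos rfl]
      apply le_antisymm
      · refine csSup_le ⟨(1:ℝ), 0, hf0, (if_pos rfl).symm⟩ ?_
        rintro t ⟨x, hx, rfl⟩
        dsimp only
        split_ifs <;> norm_num
      · exact le_csSup (bddAbove_of_le_one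
          (by rintro t ⟨x, hx, rfl⟩; dsimp only; split_ifs <;> norm_num))
          ⟨0, hf0, (if_pos rfl).symm⟩
    · rw [if_neg hy]
      obtain ⟨x0, hx0⟩ := hsurj y
      apply le_antisymm
      · refine csSup_le ⟨_, x0, hx0, rfl⟩ ?_
        rintro t ⟨x, hx, rfl⟩
        have hxne : x ≠ 0 := by
          rintro rfl
          apply hy
          rw [← hx, hf0]
        dsimp only
        rw [if_neg hxne]
      · exact Real.sSup_nonneg
          (by rintro t ⟨x, hx, rfl⟩; dsimp only; split_ifs <;> norm_num)
  · have hl : smf K α p = fun z => p (α⁻¹ • z) := by funext z; simp [smf, hα]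
    have hr : smf K α (imS f p) y = imS f p (α⁻¹ • y) := by simp [smf, hα]
    rw [hl, hr]
    have hset : {t | ∃ x, f x = y ∧ t = p (α⁻¹ • x)} = {t | ∃ z, f z = α⁻¹ • y ∧ t = p z} := by
      ext t
      constructor
      · rintro ⟨x, rfl, rfl⟩
        exact ⟨α⁻¹ • x, by rw [hsmul_f], rfl⟩
      · rintro ⟨z, hz, rfl⟩
        refine ⟨α • z, by rw [hsmul_f, hz, smul_inv_smul₀ hα], ?_⟩
        rw [inv_smul_smul₀ hα]
    simp only [imS]
    rw [hset]

lemma imI_smfh (hsurj : Function.Surjective f) (hsmul_f : ∀ (c : K) (x : V), f (c • x) = c • f x)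
    (p : V → ℝ) (α : K) (y : W) :
    imI f (smfh K α p) y = smfh K α (imI f p) y := by
  classical
  have hf0 : f 0 = 0 := by
    have h := hsmul_f 0 0
    rwa [zero_smul, zero_smul] at h
  rcases eq_or_ne α 0 with rfl | hα
  · have hl : smfh K (0:K) p = fun z : V => if z = 0 then (0:ℝ) else 1 := by
      funext z; simp [smfh]
    have hr : smfh K (0:K) (imI f p) y = if y = 0 then (0:ℝ) else 1 := by
      simp [smfh]
    rw [hl, hr]
    rcases eq_or_ne y 0 with rfl | hy
    · rw [if_pos rfl]
      apply le_antisymm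
      · exact csInf_le (bddBelow_of_nonneg
          (by rintro t ⟨x, hx, rfl⟩; dsimp only; split_ifs <;> norm_num))
          ⟨0, hf0, (if_pos rfl).symm⟩
      · exact Real.sInf_nonneg
          (by rintro t ⟨x, hx, rfl⟩; dsimp only; split_ifs <;> norm_num)
    · rw [if_neg hy]
      obtain ⟨x0, hx0⟩ := hsurj y
      apply le_antisymm
      · exact le_trans (csInf_le (bddBelow_of_nonneg
          (by rintro t ⟨x, hx, rfl⟩; dsimp only; split_ifs <;> norm_num)) ⟨x0, hx0, rfl⟩)
          (by dsimp only; split_ifs <;> norm_num)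
      · refine le_csInf ⟨_, x0, hx0, rfl⟩ ?_
        rintro t ⟨x, hx, rfl⟩
        have hxne : x ≠ 0 := by
          rintro rfl
          apply hy
          rw [← hx, hf0]
        dsimp only
        rw [if_neg hxne]
  · have hl : smfh K α p = fun z => p (α⁻¹ • z) := by funext z; simp [smfh, hα]
    have hr : smfh K α (imI f p) y = imI f p (α⁻¹ • y) := by simp [smfh, hα]
    rw [hl, hr]
    have hset : {t | ∃ x, f x = y ∧ t = p (α⁻¹ • x)} = {t | ∃ z, f z = α⁻¹ • y ∧ t = p z} := by
      ext t
      constructor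
      · rintro ⟨x, rfl, rfl⟩
        exact ⟨α⁻¹ • x, by rw [hsmul_f], rfl⟩
      · rintro ⟨z, hz, rfl⟩
        refine ⟨α • z, by rw [hsmul_f, hz, smul_inv_smul₀ hα], ?_⟩
        rw [inv_smul_smul₀ hα]
    simp only [imI]
    rw [hset]

lemma image_sum_eq (hsurj : Function.Surjective f) (hadd_f : ∀ x y : V, f (x + y) = f x + f y)
    (C D : CIFSet V) (hC : Good01 C) (hD : Good01 D) :
    CIFSet.image f (C.sum D) = (CIFSet.image f C).sum (CIFSet.image f D) := by
  refine CIFSet.ext4 ?_ ?_ ?_ ?_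
  · rw [image_r' f hsurj, sum_r', sum_r', image_r' f hsurj, image_r' f hsurj]
    funext y
    exact imS_supDecomp f hsurj hadd_f hC.1 hD.1 y
  · rw [image_w' f hsurj, sum_w', sum_w', image_w' f hsurj, image_w' f hsurj]
    funext y
    exact imS_supDecomp f hsurj hadd_f hC.2.1 hD.2.1 y
  · rw [image_rhat' f hsurj, sum_rhat', sum_rhat', image_rhat' f hsurj, image_rhat' f hsurj]
    funext y
    exact imI_infDecomp f hsurj hadd_f hC.2.2.1 hD.2.2.1 y
  · rw [image_what' f hsurj, sum_what', sum_what', image_what' f hsurj, image_what' f hsurj]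
    funext y
    exact imI_infDecomp f hsurj hadd_f hC.2.2.2 hD.2.2.2 y

lemma image_smul_eq (hsurj : Function.Surjective f) (hsmul_f : ∀ (c : K) (x : V), f (c • x) = c • f x)
    (α : K) (A : CIFSet V) :
    CIFSet.image f (CIFSet.smulCIF α A) = CIFSet.smulCIF α (CIFSet.image f A) := by
  refine CIFSet.ext4 ?_ ?_ ?_ ?_
  · rw [image_r' f hsurj, smulCIF_r', smulCIF_r', image_r' f hsurj]
    funext y
    exact imS_smf f hsurj hsmul_f A.r α y
  · rw [image_w' f hsurj, smulCIF_w', smulCIF_w', image_w' f hsurj]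
    funext y
    exact imS_smf f hsurj hsmul_f A.w α y
  · rw [image_rhat' f hsurj, smulCIF_rhat', smulCIF_rhat', image_rhat' f hsurj]
    funext y
    exact imI_smfh f hsurj hsmul_f A.rhat α y
  · rw [image_what' f hsurj, smulCIF_what', smulCIF_what', image_what' f hsurj]
    funext y
    exact imI_smfh f hsurj hsmul_f A.what α y

lemma Good01_image (hsurj : Function.Surjective f) (A : CIFSet V) (hA : Good01 A) : Good01 (CIFSet.image f A) :=
  ⟨by rw [image_r' f hsurj]; exact B01_imS f hsurj hA.1,
   by rw [image_w' f hsurj]; exact B01_imS f hsurj hA.2.1,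
   by rw [image_rhat' f hsurj]; exact B01_imI f hsurj hA.2.2.1,
   by rw [image_what' f hsurj]; exact B01_imI f hsurj hA.2.2.2⟩

lemma One0_image (hsurj : Function.Surjective f) (A : CIFSet V) (hA : Good01 A) (hA0 : One0 A) (hf0 : f 0 = 0) :
    One0 (CIFSet.image f A) :=
  ⟨by rw [image_r' f hsurj]; exact imS_zero f hsurj hA.1 hA0.1 hf0,
   by rw [image_w' f hsurj]; exact imS_zero f hsurj hA.2.1 hA0.2.1 hf0,
   by rw [image_rhat' f hsurj]; exact imI_zero f hsurj hA.2.2.1 hA0.2.2.1 hf0,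
   by rw [image_what' f hsurj]; exact imI_zero f hsurj hA.2.2.2 hA0.2.2.2 hf0⟩

end Image

lemma Good01_of_isCIF {W : Type*} [AddCommGroup W] {A : CIFSet W} (h : A.IsCIF) :
    Good01 A :=
  ⟨fun z => ⟨(h z).1.1, (h z).1.2⟩, fun z => ⟨(h z).2.1.1, (h z).2.1.2⟩,
   fun z => ⟨(h z).2.2.1.1, (h z).2.2.1.2⟩, fun z => ⟨(h z).2.2.2.1.1, (h z).2.2.2.1.2⟩⟩

lemma One0_of_subspace {K : Type*} [Field K] {W : Type*} [AddCommGroup W] [Module K W]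
    {A : CIFSet W} (h : CIFSet.IsSubspace K A) : One0 A :=
  ⟨h.r_zero, h.w_zero, h.rhat_zero, h.what_zero⟩

end Aux

theorem image_bracket_bilinear {K : Type*} [Field K] {V V' : Type*} [AddCommGroup V] [Module K V]
    [AddCommGroup V'] [Module K V']
    (V0 V1 : Submodule K V) (W0 W1 : Submodule K V')
    (br : V → V → V) (br' : V' → V' → V')
    (hLS : IsLieSuper K V0 V1 br) (hLS' : IsLieSuper K W0 W1 br')
    (f : V → V') (hf : IsAntiHom K V0 V1 W0 W1 br br' f)
    (hsurj : Function.Surjective f)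
    (A₁ A₂ B₁ B₂ A B : CIFSet V)
    (hA₁ : CIFSet.IsSubspace K A₁) (hA₂ : CIFSet.IsSubspace K A₂)
    (hB₁ : CIFSet.IsSubspace K B₁) (hB₂ : CIFSet.IsSubspace K B₂)
    (hA : CIFSet.IsSubspace K A) (hB : CIFSet.IsSubspace K B)
    (α β : K) (L : List (CIFSet V)) (L' : List (CIFSet V'))
    (hL : L = [A₁, A₂, B₁, B₂, A, B,
      CIFSet.smulCIF α A₁, CIFSet.smulCIF β A₂,
      (CIFSet.smulCIF α A₁).sum (CIFSet.smulCIF β A₂),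
      CIFSet.smulCIF α B₁, CIFSet.smulCIF β B₂,
      (CIFSet.smulCIF α B₁).sum (CIFSet.smulCIF β B₂)])
    (hL' : L' = [CIFSet.image f A₁, CIFSet.image f A₂, CIFSet.image f B₁,
      CIFSet.image f B₂, CIFSet.image f A, CIFSet.image f B,
      CIFSet.image f ((CIFSet.smulCIF α A₁).sum (CIFSet.smulCIF β A₂)),
      CIFSet.image f ((CIFSet.smulCIF α B₁).sum (CIFSet.smulCIF β B₂)),
      CIFSet.bracket K br' (CIFSet.image f A₁) (CIFSet.image f B),
      CIFSet.bracket K br' (CIFSet.image f A₂) (CIFSet.image f B),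
      CIFSet.smulCIF α (CIFSet.bracket K br' (CIFSet.image f A₁) (CIFSet.image f B)),
      CIFSet.smulCIF β (CIFSet.bracket K br' (CIFSet.image f A₂) (CIFSet.image f B)),
      CIFSet.bracket K br' (CIFSet.image f A) (CIFSet.image f B₁),
      CIFSet.bracket K br' (CIFSet.image f A) (CIFSet.image f B₂),
      CIFSet.smulCIF α (CIFSet.bracket K br' (CIFSet.image f A) (CIFSet.image f B₁)),
      CIFSet.smulCIF β (CIFSet.bracket K br' (CIFSet.image f A) (CIFSet.image f B₂))])
    (hhom : ∀ C ∈ L, ∀ D ∈ L, C.Homog D)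
    (hhom' : ∀ C ∈ L', ∀ D ∈ L', C.Homog D) :
    CIFSet.bracket K br'
        (CIFSet.image f ((CIFSet.smulCIF α A₁).sum (CIFSet.smulCIF β A₂)))
        (CIFSet.image f B)
      = (CIFSet.smulCIF α (CIFSet.bracket K br' (CIFSet.image f A₁) (CIFSet.image f B))).sum
          (CIFSet.smulCIF β (CIFSet.bracket K br' (CIFSet.image f A₂) (CIFSet.image f B))) ∧
    CIFSet.bracket K br' (CIFSet.image f A)
        (CIFSet.image f ((CIFSet.smulCIF α B₁).sum (CIFSet.smulCIF β B₂)))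
      = (CIFSet.smulCIF α (CIFSet.bracket K br' (CIFSet.image f A) (CIFSet.image f B₁))).sum
          (CIFSet.smulCIF β (CIFSet.bracket K br' (CIFSet.image f A) (CIFSet.image f B₂))) := by
  have hf0 : f 0 = 0 := by
    have h := hf.map_smul 0 0
    rwa [zero_smul, zero_smul] at h
  have gA₁ : Good01 A₁ := Good01_of_isCIF hA₁.isCIF
  have gA₂ : Good01 A₂ := Good01_of_isCIF hA₂.isCIF
  have gB₁ : Good01 B₁ := Good01_of_isCIF hB₁.isCIF
  have gB₂ : Good01 B₂ := Good01_of_isCIF hB₂.isCIF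
  have gA : Good01 A := Good01_of_isCIF hA.isCIF
  have gB : Good01 B := Good01_of_isCIF hB.isCIF
  have iA₁ : Good01 (CIFSet.image f A₁) := Good01_image f hsurj A₁ gA₁
  have iA₂ : Good01 (CIFSet.image f A₂) := Good01_image f hsurj A₂ gA₂
  have iB₁ : Good01 (CIFSet.image f B₁) := Good01_image f hsurj B₁ gB₁
  have iB₂ : Good01 (CIFSet.image f B₂) := Good01_image f hsurj B₂ gB₂
  have iA : Good01 (CIFSet.image f A) := Good01_image f hsurj A gA
  have iB : Good01 (CIFSet.image f B) := Good01_image f hsurj B gB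
  have oA₁ : One0 (CIFSet.image f A₁) :=
    One0_image f hsurj A₁ gA₁ (One0_of_subspace hA₁) hf0
  have oA₂ : One0 (CIFSet.image f A₂) :=
    One0_image f hsurj A₂ gA₂ (One0_of_subspace hA₂) hf0
  have oB₁ : One0 (CIFSet.image f B₁) :=
    One0_image f hsurj B₁ gB₁ (One0_of_subspace hB₁) hf0
  have oB₂ : One0 (CIFSet.image f B₂) :=
    One0_image f hsurj B₂ gB₂ (One0_of_subspace hB₂) hf0
  have oA : One0 (CIFSet.image f A) := One0_image f hsurj A gA (One0_of_subspace hA) hf0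
  have oB : One0 (CIFSet.image f B) := One0_image f hsurj B gB (One0_of_subspace hB) hf0
  constructor
  · rw [image_sum_eq f hsurj hf.map_add (CIFSet.smulCIF α A₁) (CIFSet.smulCIF β A₂)
      (Good01_smulCIF K gA₁ α) (Good01_smulCIF K gA₂ β),
      image_smul_eq f hsurj hf.map_smul α A₁, image_smul_eq f hsurj hf.map_smul β A₂]
    exact bracket_sum_smul_left K (br := br') hLS'.add_left hLS'.smul_left
      (CIFSet.image f A₁) (CIFSet.image f A₂) (CIFSet.image f B)
      iA₁ iA₂ iB oA₁ oA₂ oB α β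
  · rw [image_sum_eq f hsurj hf.map_add (CIFSet.smulCIF α B₁) (CIFSet.smulCIF β B₂)
      (Good01_smulCIF K gB₁ α) (Good01_smulCIF K gB₂ β),
      image_smul_eq f hsurj hf.map_smul α B₁, image_smul_eq f hsurj hf.map_smul β B₂]
    exact bracket_sum_smul_right K (br := br') hLS'.add_right hLS'.smul_right
      (CIFSet.image f B₁) (CIFSet.image f B₂) (CIFSet.image f A)
      iB₁ iB₂ iA oB₁ oB₂ oA α β

end CIF
end

section
/- Let φ : V → V' be a surjective anti-homomorphism of Lie superalgebras and let A₁, A₂, B₁, B₂, A, B be CIF vector subspaces of V', all pairwise homogeneous with one another and with the derived CIF sets appearing below. Then for all nonzero α, β ∈ K: [φ⁻¹(αA₁ + βA₂), φ⁻¹(B)] = α[φ⁻¹(A₁), φ⁻¹(B)] + β[φ⁻¹(A₂), φ⁻¹(B)] and [φ⁻¹(A), φ⁻¹(αB₁ + βB₂)] = α[φ⁻¹(A), φ⁻¹(B₁)] + β[φ⁻¹(A), φ⁻¹(B₂)] as CIF sets on V. -/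
namespace CIF

section Aux

variable {K : Type*} [Field K] {V : Type*} [AddCommGroup V] [Module K V]

private lemma myext {A B : CIFSet V} (h1 : A.r = B.r) (h2 : A.w = B.w)
    (h3 : A.rhat = B.rhat) (h4 : A.what = B.what) : A = B := by
  cases A; cases B; simp_all

private lemma inf'_append {m n : ℕ} (F : Fin m → ℝ) (G : Fin n → ℝ)
    (hm : (Finset.univ : Finset (Fin m)).Nonempty)
    (hn : (Finset.univ : Finset (Fin n)).Nonempty)
    (hmn : (Finset.univ : Finset (Fin (m + n))).Nonempty) :
    Finset.univ.inf' hmn (Fin.append F G) =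
      min (Finset.univ.inf' hm F) (Finset.univ.inf' hn G) := by
  apply le_antisymm
  · apply le_min
    · obtain ⟨i, -, hi⟩ := Finset.exists_mem_eq_inf' hm F
      rw [hi]
      calc Finset.univ.inf' hmn (Fin.append F G) ≤ Fin.append F G (Fin.castAdd _ i) :=
            Finset.inf'_le _ (Finset.mem_univ _)
        _ = F i := Fin.append_left ..
    · obtain ⟨i, -, hi⟩ := Finset.exists_mem_eq_inf' hn G
      rw [hi]
      calc Finset.univ.inf' hmn (Fin.append F G) ≤ Fin.append F G (Fin.natAdd _ i) :=
            Finset.inf'_le _ (Finset.mem_univ _)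
        _ = G i := Fin.append_right ..
  · apply Finset.le_inf'
    intro i _
    cases i using Fin.addCases with
    | left j =>
        rw [Fin.append_left]
        exact le_trans (min_le_left _ _) (Finset.inf'_le _ (Finset.mem_univ _))
    | right j =>
        rw [Fin.append_right]
        exact le_trans (min_le_right _ _) (Finset.inf'_le _ (Finset.mem_univ _))

private lemma sup'_append {m n : ℕ} (F : Fin m → ℝ) (G : Fin n → ℝ)
    (hm : (Finset.univ : Finset (Fin m)).Nonempty)
    (hn : (Finset.univ : Finset (Fin n)).Nonempty)
    (hmn : (Finset.univ : Finset (Fin (m + n))).Nonempty) :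
    Finset.univ.sup' hmn (Fin.append F G) =
      max (Finset.univ.sup' hm F) (Finset.univ.sup' hn G) := by
  apply le_antisymm
  · apply Finset.sup'_le
    intro i _
    cases i using Fin.addCases with
    | left j =>
        rw [Fin.append_left]
        exact le_trans (Finset.le_sup' _ (Finset.mem_univ _)) (le_max_left _ _)
    | right j =>
        rw [Fin.append_right]
        exact le_trans (Finset.le_sup' _ (Finset.mem_univ _)) (le_max_right _ _)
  · apply max_le
    · obtain ⟨i, -, hi⟩ := Finset.exists_mem_eq_sup' hm F
      rw [hi]
      calc F i = Fin.append F G (Fin.castAdd _ i) := (Fin.append_left ..).symm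
        _ ≤ Finset.univ.sup' hmn (Fin.append F G) := Finset.le_sup' _ (Finset.mem_univ _)
    · obtain ⟨i, -, hi⟩ := Finset.exists_mem_eq_sup' hn G
      rw [hi]
      calc G i = Fin.append F G (Fin.natAdd _ i) := (Fin.append_right ..).symm
        _ ≤ Finset.univ.sup' hmn (Fin.append F G) := Finset.le_sup' _ (Finset.mem_univ _)

end Aux
section Aux2
set_option linter.unusedSectionVars false

variable {K : Type*} [Field K] {V : Type*} [AddCommGroup V] [Module K V]

private lemma mem_repMin_add {br : V → V → V} {f g : V → ℝ} {y z : V} {t₁ t₂ : ℝ}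
    (h₁ : t₁ ∈ bracketRepMin K br f g y) (h₂ : t₂ ∈ bracketRepMin K br f g z) :
    min t₁ t₂ ∈ bracketRepMin K br f g (y + z) := by
  obtain ⟨n₁, c₁, a₁, b₁, hy, ht₁⟩ := h₁
  obtain ⟨n₂, c₂, a₂, b₂, hz, ht₂⟩ := h₂
  haveI : Nonempty (Fin ((n₁ + 1) + (n₂ + 1))) := ⟨⟨0, by omega⟩⟩
  refine ⟨n₁ + 1 + n₂, Fin.append (n := n₂ + 1) c₁ c₂, Fin.append (n := n₂ + 1) a₁ a₂,
    Fin.append (n := n₂ + 1) b₁ b₂, ?_, ?_⟩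
  · show y + z = ∑ i : Fin ((n₁ + 1) + (n₂ + 1)), Fin.append (n := n₂ + 1) c₁ c₂ i •
      br (Fin.append (n := n₂ + 1) a₁ a₂ i) (Fin.append (n := n₂ + 1) b₁ b₂ i)
    rw [Fin.sum_univ_add]
    simp only [Fin.append_left, Fin.append_right]
    rw [← hy, ← hz]
  · have hfun : (fun i : Fin ((n₁ + 1) + (n₂ + 1)) =>
        min (f (Fin.append a₁ a₂ i)) (g (Fin.append b₁ b₂ i))) =
        Fin.append (fun i => min (f (a₁ i)) (g (b₁ i)))
          (fun i => min (f (a₂ i)) (g (b₂ i))) := by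
      funext i
      cases i using Fin.addCases with
      | left j => simp [Fin.append_left]
      | right j => simp [Fin.append_right]
    show min t₁ t₂ = Finset.univ.inf' Finset.univ_nonempty
      (fun i : Fin ((n₁ + 1) + (n₂ + 1)) =>
        min (f (Fin.append a₁ a₂ i)) (g (Fin.append b₁ b₂ i)))
    rw [hfun, inf'_append _ _ Finset.univ_nonempty Finset.univ_nonempty, ← ht₁, ← ht₂]

private lemma mem_repMax_add {br : V → V → V} {f g : V → ℝ} {y z : V} {t₁ t₂ : ℝ}
    (h₁ : t₁ ∈ bracketRepMax K br f g y) (h₂ : t₂ ∈ bracketRepMax K br f g z) :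
    max t₁ t₂ ∈ bracketRepMax K br f g (y + z) := by
  obtain ⟨n₁, c₁, a₁, b₁, hy, ht₁⟩ := h₁
  obtain ⟨n₂, c₂, a₂, b₂, hz, ht₂⟩ := h₂
  haveI : Nonempty (Fin ((n₁ + 1) + (n₂ + 1))) := ⟨⟨0, by omega⟩⟩
  refine ⟨n₁ + 1 + n₂, Fin.append (n := n₂ + 1) c₁ c₂, Fin.append (n := n₂ + 1) a₁ a₂,
    Fin.append (n := n₂ + 1) b₁ b₂, ?_, ?_⟩
  · show y + z = ∑ i : Fin ((n₁ + 1) + (n₂ + 1)), Fin.append (n := n₂ + 1) c₁ c₂ i •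
      br (Fin.append (n := n₂ + 1) a₁ a₂ i) (Fin.append (n := n₂ + 1) b₁ b₂ i)
    rw [Fin.sum_univ_add]
    simp only [Fin.append_left, Fin.append_right]
    rw [← hy, ← hz]
  · have hfun : (fun i : Fin ((n₁ + 1) + (n₂ + 1)) =>
        max (f (Fin.append a₁ a₂ i)) (g (Fin.append b₁ b₂ i))) =
        Fin.append (fun i => max (f (a₁ i)) (g (b₁ i)))
          (fun i => max (f (a₂ i)) (g (b₂ i))) := by
      funext i
      cases i using Fin.addCases with
      | left j => simp [Fin.append_left]
      | right j => simp [Fin.append_right]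
    show max t₁ t₂ = Finset.univ.sup' Finset.univ_nonempty
      (fun i : Fin ((n₁ + 1) + (n₂ + 1)) =>
        max (f (Fin.append a₁ a₂ i)) (g (Fin.append b₁ b₂ i)))
    rw [hfun, sup'_append _ _ Finset.univ_nonempty Finset.univ_nonempty, ← ht₁, ← ht₂]

private lemma exists_le_repMin_smul {br : V → V → V}
    (hsmul : ∀ (c : K) (u b : V), br (c • u) b = c • br u b)
    {α : K} (hα : α ≠ 0) {f F g : V → ℝ} (hF : ∀ u, f u ≤ F (α • u))
    {x : V} {t : ℝ} (h : t ∈ bracketRepMin K br f g x) :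
    ∃ t' ∈ bracketRepMin K br F g (α • x), t ≤ t' := by
  obtain ⟨n, c, a, b, hx, ht⟩ := h
  refine ⟨_, ⟨n, c, fun i => α • a i, b, ?_, rfl⟩, ?_⟩
  · rw [hx, Finset.smul_sum]
    apply Finset.sum_congr rfl
    intro i _
    rw [hsmul, smul_comm]
  · rw [ht]
    apply Finset.le_inf'
    intro i _
    exact le_trans (Finset.inf'_le _ (Finset.mem_univ i)) (min_le_min (hF _) le_rfl)

private lemma exists_ge_repMax_smul {br : V → V → V}
    (hsmul : ∀ (c : K) (u b : V), br (c • u) b = c • br u b)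
    {α : K} (hα : α ≠ 0) {f F g : V → ℝ} (hF : ∀ u, F (α • u) ≤ f u)
    {x : V} {t : ℝ} (h : t ∈ bracketRepMax K br f g x) :
    ∃ t' ∈ bracketRepMax K br F g (α • x), t' ≤ t := by
  obtain ⟨n, c, a, b, hx, ht⟩ := h
  refine ⟨_, ⟨n, c, fun i => α • a i, b, ?_, rfl⟩, ?_⟩
  · rw [hx, Finset.smul_sum]
    apply Finset.sum_congr rfl
    intro i _
    rw [hsmul, smul_comm]
  · rw [ht]
    apply Finset.sup'_le
    intro i _
    exact le_trans (max_le_max (hF _) le_rfl)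
      (Finset.le_sup' (fun i => max (f (a i)) (g (b i))) (Finset.mem_univ i))

private lemma repMin_le_one {br : V → V → V} {f g : V → ℝ} (hg : ∀ b, g b ≤ 1)
    {x : V} {t : ℝ} (h : t ∈ bracketRepMin K br f g x) : t ≤ 1 := by
  obtain ⟨n, c, a, b, -, rfl⟩ := h
  exact le_trans (Finset.inf'_le _ (Finset.mem_univ 0))
    (le_trans (min_le_right _ _) (hg _))

private lemma repMax_nonneg {br : V → V → V} {f g : V → ℝ} (hg : ∀ b, 0 ≤ g b)
    {x : V} {t : ℝ} (h : t ∈ bracketRepMax K br f g x) : 0 ≤ t := by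
  obtain ⟨n, c, a, b, -, rfl⟩ := h
  exact le_trans (le_trans (hg _) (le_max_right _ _))
    (Finset.le_sup' (fun i => max (f (a i)) (g (b i))) (Finset.mem_univ 0))

private lemma bddAbove_repMin {br : V → V → V} {f g : V → ℝ} (hg : ∀ b, g b ≤ 1)
    (x : V) : BddAbove (insert 0 (bracketRepMin K br f g x)) := by
  refine ⟨1, ?_⟩
  rintro t (rfl | h)
  · norm_num
  · exact repMin_le_one hg h

private lemma bddBelow_repMax {br : V → V → V} {f g : V → ℝ} (hg : ∀ b, 0 ≤ g b)
    (x : V) : BddBelow (insert 1 (bracketRepMax K br f g x)) := by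
  refine ⟨0, ?_⟩
  rintro t (rfl | h)
  · norm_num
  · exact repMax_nonneg hg h

private lemma repMin_flip (br : V → V → V) (f g : V → ℝ) (x : V) :
    bracketRepMin K br f g x = bracketRepMin K (fun u v => br v u) g f x := by
  ext t
  constructor
  · rintro ⟨n, c, a, b, hx, ht⟩
    refine ⟨n, c, b, a, hx, ?_⟩
    rw [ht]
    exact Finset.inf'_congr Finset.univ_nonempty rfl (fun i _ => min_comm _ _)
  · rintro ⟨n, c, a, b, hx, ht⟩
    refine ⟨n, c, b, a, hx, ?_⟩
    rw [ht]
    exact Finset.inf'_congr Finset.univ_nonempty rfl (fun i _ => min_comm _ _)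

private lemma repMax_flip (br : V → V → V) (f g : V → ℝ) (x : V) :
    bracketRepMax K br f g x = bracketRepMax K (fun u v => br v u) g f x := by
  ext t
  constructor
  · rintro ⟨n, c, a, b, hx, ht⟩
    refine ⟨n, c, b, a, hx, ?_⟩
    rw [ht]
    exact Finset.sup'_congr Finset.univ_nonempty rfl (fun i _ => max_comm _ _)
  · rintro ⟨n, c, a, b, hx, ht⟩
    refine ⟨n, c, b, a, hx, ?_⟩
    rw [ht]
    exact Finset.sup'_congr Finset.univ_nonempty rfl (fun i _ => max_comm _ _)

end Aux2
section Core
set_option linter.unusedSectionVars false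
set_option maxHeartbeats 1000000

variable {K : Type*} [Field K] {V : Type*} [AddCommGroup V] [Module K V]

private lemma core_sup {br : V → V → V}
    (hadd : ∀ u v b : V, br (u + v) b = br u b + br v b)
    (hsmul : ∀ (c : K) (u b : V), br (c • u) b = c • br u b)
    (p₁ p₂ q : V → ℝ)
    (hp₁ : ∀ u, p₁ u ≤ 1) (hp₂ : ∀ u, p₂ u ≤ 1) (hq : ∀ u, q u ≤ 1)
    (hp₁0 : p₁ 0 = 1) (hp₂0 : p₂ 0 = 1)
    {α β : K} (hα : α ≠ 0) (hβ : β ≠ 0) (x : V) :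
    sSup (insert 0 (bracketRepMin K br
        (supDecomp (fun u => p₁ (α⁻¹ • u)) (fun v => p₂ (β⁻¹ • v))) q x)) =
    supDecomp (fun s => sSup (insert 0 (bracketRepMin K br p₁ q (α⁻¹ • s))))
      (fun t => sSup (insert 0 (bracketRepMin K br p₂ q (β⁻¹ • t)))) x := by
  set P : V → ℝ := supDecomp (fun u => p₁ (α⁻¹ • u)) (fun v => p₂ (β⁻¹ • v)) with hPdef
  set S₁ : V → ℝ := fun s => sSup (insert 0 (bracketRepMin K br p₁ q (α⁻¹ • s))) with hS₁def
  set S₂ : V → ℝ := fun t => sSup (insert 0 (bracketRepMin K br p₂ q (β⁻¹ • t))) with hS₂def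
  have hbddP : ∀ u : V, BddAbove (insert 0
      {t | ∃ a b : V, u = a + b ∧ t = min (p₁ (α⁻¹ • a)) (p₂ (β⁻¹ • b))}) := by
    intro u
    refine ⟨1, ?_⟩
    rintro t (rfl | ⟨a, b, -, rfl⟩)
    · norm_num
    · exact le_trans (min_le_left _ _) (hp₁ _)
  have hS₁le : ∀ s, S₁ s ≤ 1 := by
    intro s
    apply csSup_le (Set.insert_nonempty _ _)
    rintro t (rfl | h)
    · norm_num
    · exact repMin_le_one hq h
  have hS₂le : ∀ s, S₂ s ≤ 1 := by
    intro s
    apply csSup_le (Set.insert_nonempty _ _)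
    rintro t (rfl | h)
    · norm_num
    · exact repMin_le_one hq h
  have hbddRHS : BddAbove (insert 0
      {t | ∃ a b : V, x = a + b ∧ t = min (S₁ a) (S₂ b)}) := by
    refine ⟨1, ?_⟩
    rintro t (rfl | ⟨a, b, -, rfl⟩)
    · norm_num
    · exact le_trans (min_le_left _ _) (hS₁le _)
  rw [supDecomp]
  apply le_antisymm
  · apply csSup_le (Set.insert_nonempty _ _)
    rintro t (rfl | ⟨n, c, a, b, hx, rfl⟩)
    · exact le_csSup hbddRHS (Set.mem_insert _ _)
    · apply le_of_forall_lt
      intro d hd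
      rcases lt_or_ge d 0 with hd0 | hd0
      · exact lt_of_lt_of_le hd0 (le_csSup hbddRHS (Set.mem_insert _ _))
      have hdi : ∀ i, d < min (P (a i)) (q (b i)) := fun i =>
        lt_of_lt_of_le hd (Finset.inf'_le _ (Finset.mem_univ i))
      have hchoice : ∀ i, ∃ u v : V, a i = u + v ∧
          d < min (p₁ (α⁻¹ • u)) (p₂ (β⁻¹ • v)) := by
        intro i
        have h1 : d < P (a i) := lt_of_lt_of_le (hdi i) (min_le_left _ _)
        rw [hPdef, supDecomp] at h1
        obtain ⟨e, he, hde⟩ := exists_lt_of_lt_csSup (Set.insert_nonempty _ _) h1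
        rcases he with rfl | ⟨u, v, huv, rfl⟩
        · exact absurd hde (not_lt.2 hd0)
        · exact ⟨u, v, huv, hde⟩
      choose u v huv hduv using hchoice
      have hx' : x = (∑ i, c i • br (u i) (b i)) + (∑ i, c i • br (v i) (b i)) := by
        rw [hx, ← Finset.sum_add_distrib]
        apply Finset.sum_congr rfl
        intro i _
        rw [huv i, hadd, smul_add]
      have hs1 : d < S₁ (∑ i, c i • br (u i) (b i)) := by
        have hmem : (Finset.univ.inf' Finset.univ_nonempty
            fun i => min (p₁ (α⁻¹ • u i)) (q (b i)))
            ∈ bracketRepMin K br p₁ q (α⁻¹ • ∑ i, c i • br (u i) (b i)) := by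
          refine ⟨n, c, fun i => α⁻¹ • u i, b, ?_, rfl⟩
          rw [Finset.smul_sum]
          apply Finset.sum_congr rfl
          intro i _
          rw [hsmul, smul_comm]
        refine lt_of_lt_of_le ?_ (le_csSup (bddAbove_repMin hq _)
          (Set.mem_insert_of_mem _ hmem))
        rw [Finset.lt_inf'_iff]
        intro i _
        exact lt_min (lt_of_lt_of_le (hduv i) (min_le_left _ _))
          (lt_of_lt_of_le (hdi i) (min_le_right _ _))
      have hs2 : d < S₂ (∑ i, c i • br (v i) (b i)) := by
        have hmem : (Finset.univ.inf' Finset.univ_nonempty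
            fun i => min (p₂ (β⁻¹ • v i)) (q (b i)))
            ∈ bracketRepMin K br p₂ q (β⁻¹ • ∑ i, c i • br (v i) (b i)) := by
          refine ⟨n, c, fun i => β⁻¹ • v i, b, ?_, rfl⟩
          rw [Finset.smul_sum]
          apply Finset.sum_congr rfl
          intro i _
          rw [hsmul, smul_comm]
        refine lt_of_lt_of_le ?_ (le_csSup (bddAbove_repMin hq _)
          (Set.mem_insert_of_mem _ hmem))
        rw [Finset.lt_inf'_iff]
        intro i _
        exact lt_min (lt_of_lt_of_le (hduv i) (min_le_right _ _))
          (lt_of_lt_of_le (hdi i) (min_le_right _ _))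
      calc d < min (S₁ (∑ i, c i • br (u i) (b i))) (S₂ (∑ i, c i • br (v i) (b i))) :=
            lt_min hs1 hs2
        _ ≤ _ := le_csSup hbddRHS (Set.mem_insert_of_mem _ ⟨_, _, hx', rfl⟩)
  · apply csSup_le (Set.insert_nonempty _ _)
    rintro t (rfl | ⟨s, t', hx, rfl⟩)
    · exact le_csSup (bddAbove_repMin hq _) (Set.mem_insert _ _)
    · apply le_of_forall_lt
      intro d hd
      rcases lt_or_ge d 0 with hd0 | hd0
      · exact lt_of_lt_of_le hd0 (le_csSup (bddAbove_repMin hq _) (Set.mem_insert _ _))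
      rw [lt_min_iff] at hd
      obtain ⟨e₁, he₁, hde₁⟩ := exists_lt_of_lt_csSup (Set.insert_nonempty _ _) hd.1
      rcases he₁ with rfl | he₁
      · exact absurd hde₁ (not_lt.2 hd0)
      obtain ⟨e₂, he₂, hde₂⟩ := exists_lt_of_lt_csSup (Set.insert_nonempty _ _) hd.2
      rcases he₂ with rfl | he₂
      · exact absurd hde₂ (not_lt.2 hd0)
      have hF₁ : ∀ w, p₁ w ≤ P (α • w) := by
        intro w
        have hm : min (p₁ (α⁻¹ • α • w)) (p₂ (β⁻¹ • (0 : V))) ∈ insert (0 : ℝ)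
            {t | ∃ a b : V, α • w = a + b ∧ t = min (p₁ (α⁻¹ • a)) (p₂ (β⁻¹ • b))} :=
          Set.mem_insert_of_mem _ ⟨α • w, 0, (add_zero _).symm, rfl⟩
        have := le_csSup (hbddP (α • w)) hm
        rw [inv_smul_smul₀ hα, smul_zero, hp₂0, min_eq_left (hp₁ w)] at this
        rw [hPdef, supDecomp]
        exact this
      have hF₂ : ∀ w, p₂ w ≤ P (β • w) := by
        intro w
        have hm : min (p₁ (α⁻¹ • (0 : V))) (p₂ (β⁻¹ • β • w)) ∈ insert (0 : ℝ)
            {t | ∃ a b : V, β • w = a + b ∧ t = min (p₁ (α⁻¹ • a)) (p₂ (β⁻¹ • b))} :=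
          Set.mem_insert_of_mem _ ⟨0, β • w, (zero_add _).symm, rfl⟩
        have := le_csSup (hbddP (β • w)) hm
        rw [inv_smul_smul₀ hβ, smul_zero, hp₁0, min_eq_right (hp₂ w)] at this
        rw [hPdef, supDecomp]
        exact this
      obtain ⟨t₁', ht₁'mem, ht₁'le⟩ := exists_le_repMin_smul hsmul hα hF₁ he₁
      rw [smul_inv_smul₀ hα] at ht₁'mem
      obtain ⟨t₂', ht₂'mem, ht₂'le⟩ := exists_le_repMin_smul hsmul hβ hF₂ he₂
      rw [smul_inv_smul₀ hβ] at ht₂'mem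
      have hmm : min t₁' t₂' ∈ bracketRepMin K br P q x := by
        rw [hx]
        exact mem_repMin_add ht₁'mem ht₂'mem
      calc d < min t₁' t₂' := lt_min (lt_of_lt_of_le hde₁ ht₁'le)
            (lt_of_lt_of_le hde₂ ht₂'le)
        _ ≤ _ := le_csSup (bddAbove_repMin hq _) (Set.mem_insert_of_mem _ hmm)

end Core
section Core2
set_option linter.unusedSectionVars false
set_option maxHeartbeats 1000000

variable {K : Type*} [Field K] {V : Type*} [AddCommGroup V] [Module K V]

private lemma core_inf {br : V → V → V}
    (hadd : ∀ u v b : V, br (u + v) b = br u b + br v b)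
    (hsmul : ∀ (c : K) (u b : V), br (c • u) b = c • br u b)
    (p₁ p₂ q : V → ℝ)
    (hp₁ : ∀ u, 0 ≤ p₁ u) (hp₂ : ∀ u, 0 ≤ p₂ u) (hq : ∀ u, 0 ≤ q u)
    (hp₁0 : p₁ 0 = 0) (hp₂0 : p₂ 0 = 0)
    {α β : K} (hα : α ≠ 0) (hβ : β ≠ 0) (x : V) :
    sInf (insert 1 (bracketRepMax K br
        (infDecomp (fun u => p₁ (α⁻¹ • u)) (fun v => p₂ (β⁻¹ • v))) q x)) =
    infDecomp (fun s => sInf (insert 1 (bracketRepMax K br p₁ q (α⁻¹ • s))))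
      (fun t => sInf (insert 1 (bracketRepMax K br p₂ q (β⁻¹ • t)))) x := by
  set P : V → ℝ := infDecomp (fun u => p₁ (α⁻¹ • u)) (fun v => p₂ (β⁻¹ • v)) with hPdef
  set S₁ : V → ℝ := fun s => sInf (insert 1 (bracketRepMax K br p₁ q (α⁻¹ • s))) with hS₁def
  set S₂ : V → ℝ := fun t => sInf (insert 1 (bracketRepMax K br p₂ q (β⁻¹ • t))) with hS₂def
  have hbddP : ∀ u : V, BddBelow (insert 1
      {t | ∃ a b : V, u = a + b ∧ t = max (p₁ (α⁻¹ • a)) (p₂ (β⁻¹ • b))}) := by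
    intro u
    refine ⟨0, ?_⟩
    rintro t (rfl | ⟨a, b, -, rfl⟩)
    · norm_num
    · exact le_trans (hp₁ _) (le_max_left _ _)
  have hS₁ge : ∀ s, 0 ≤ S₁ s := by
    intro s
    apply le_csInf (Set.insert_nonempty _ _)
    rintro t (rfl | h)
    · norm_num
    · exact repMax_nonneg hq h
  have hS₂ge : ∀ s, 0 ≤ S₂ s := by
    intro s
    apply le_csInf (Set.insert_nonempty _ _)
    rintro t (rfl | h)
    · norm_num
    · exact repMax_nonneg hq h
  have hbddRHS : BddBelow (insert 1
      {t | ∃ a b : V, x = a + b ∧ t = max (S₁ a) (S₂ b)}) := by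
    refine ⟨0, ?_⟩
    rintro t (rfl | ⟨a, b, -, rfl⟩)
    · norm_num
    · exact le_trans (hS₁ge _) (le_max_left _ _)
  rw [infDecomp]
  apply le_antisymm
  · apply le_csInf (Set.insert_nonempty _ _)
    rintro t (rfl | ⟨s, t', hx, rfl⟩)
    · exact csInf_le (bddBelow_repMax hq _) (Set.mem_insert _ _)
    · apply le_of_forall_gt
      intro d hd
      rcases lt_or_ge 1 d with hd1 | hd1
      · exact lt_of_le_of_lt (csInf_le (bddBelow_repMax hq _) (Set.mem_insert _ _)) hd1
      rw [max_lt_iff] at hd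
      obtain ⟨e₁, he₁, hde₁⟩ := exists_lt_of_csInf_lt (Set.insert_nonempty _ _) hd.1
      rcases he₁ with rfl | he₁
      · exact absurd hde₁ (not_lt.2 hd1)
      obtain ⟨e₂, he₂, hde₂⟩ := exists_lt_of_csInf_lt (Set.insert_nonempty _ _) hd.2
      rcases he₂ with rfl | he₂
      · exact absurd hde₂ (not_lt.2 hd1)
      have hF₁ : ∀ w, P (α • w) ≤ p₁ w := by
        intro w
        have hm : max (p₁ (α⁻¹ • α • w)) (p₂ (β⁻¹ • (0 : V))) ∈ insert (1 : ℝ)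
            {t | ∃ a b : V, α • w = a + b ∧ t = max (p₁ (α⁻¹ • a)) (p₂ (β⁻¹ • b))} :=
          Set.mem_insert_of_mem _ ⟨α • w, 0, (add_zero _).symm, rfl⟩
        have := csInf_le (hbddP (α • w)) hm
        rw [inv_smul_smul₀ hα, smul_zero, hp₂0, max_eq_left (hp₁ w)] at this
        rw [hPdef, infDecomp]
        exact this
      have hF₂ : ∀ w, P (β • w) ≤ p₂ w := by
        intro w
        have hm : max (p₁ (α⁻¹ • (0 : V))) (p₂ (β⁻¹ • β • w)) ∈ insert (1 : ℝ)
            {t | ∃ a b : V, β • w = a + b ∧ t = max (p₁ (α⁻¹ • a)) (p₂ (β⁻¹ • b))} :=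
          Set.mem_insert_of_mem _ ⟨0, β • w, (zero_add _).symm, rfl⟩
        have := csInf_le (hbddP (β • w)) hm
        rw [inv_smul_smul₀ hβ, smul_zero, hp₁0, max_eq_right (hp₂ w)] at this
        rw [hPdef, infDecomp]
        exact this
      obtain ⟨t₁', ht₁'mem, ht₁'le⟩ := exists_ge_repMax_smul hsmul hα hF₁ he₁
      rw [smul_inv_smul₀ hα] at ht₁'mem
      obtain ⟨t₂', ht₂'mem, ht₂'le⟩ := exists_ge_repMax_smul hsmul hβ hF₂ he₂
      rw [smul_inv_smul₀ hβ] at ht₂'mem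
      have hmm : max t₁' t₂' ∈ bracketRepMax K br P q x := by
        rw [hx]
        exact mem_repMax_add ht₁'mem ht₂'mem
      calc sInf (insert 1 (bracketRepMax K br P q x)) ≤ max t₁' t₂' :=
            csInf_le (bddBelow_repMax hq _) (Set.mem_insert_of_mem _ hmm)
        _ < d := max_lt (lt_of_le_of_lt ht₁'le hde₁) (lt_of_le_of_lt ht₂'le hde₂)
  · apply le_csInf (Set.insert_nonempty _ _)
    rintro t (rfl | ⟨n, c, a, b, hx, rfl⟩)
    · exact csInf_le hbddRHS (Set.mem_insert _ _)
    · apply le_of_forall_gt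
      intro d hd
      rcases lt_or_ge 1 d with hd1 | hd1
      · exact lt_of_le_of_lt (csInf_le hbddRHS (Set.mem_insert _ _)) hd1
      have hdi : ∀ i, max (P (a i)) (q (b i)) < d := fun i =>
        lt_of_le_of_lt (Finset.le_sup' (fun i => max (P (a i)) (q (b i)))
          (Finset.mem_univ i)) hd
      have hchoice : ∀ i, ∃ u v : V, a i = u + v ∧
          max (p₁ (α⁻¹ • u)) (p₂ (β⁻¹ • v)) < d := by
        intro i
        have h1 : P (a i) < d := lt_of_le_of_lt (le_max_left _ _) (hdi i)
        rw [hPdef, infDecomp] at h1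
        obtain ⟨e, he, hde⟩ := exists_lt_of_csInf_lt (Set.insert_nonempty _ _) h1
        rcases he with rfl | ⟨u, v, huv, rfl⟩
        · exact absurd hde (not_lt.2 hd1)
        · exact ⟨u, v, huv, hde⟩
      choose u v huv hduv using hchoice
      have hx' : x = (∑ i, c i • br (u i) (b i)) + (∑ i, c i • br (v i) (b i)) := by
        rw [hx, ← Finset.sum_add_distrib]
        apply Finset.sum_congr rfl
        intro i _
        rw [huv i, hadd, smul_add]
      have hs1 : S₁ (∑ i, c i • br (u i) (b i)) < d := by
        have hmem : (Finset.univ.sup' Finset.univ_nonempty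
            fun i => max (p₁ (α⁻¹ • u i)) (q (b i)))
            ∈ bracketRepMax K br p₁ q (α⁻¹ • ∑ i, c i • br (u i) (b i)) := by
          refine ⟨n, c, fun i => α⁻¹ • u i, b, ?_, rfl⟩
          rw [Finset.smul_sum]
          apply Finset.sum_congr rfl
          intro i _
          rw [hsmul, smul_comm]
        refine lt_of_le_of_lt (csInf_le (bddBelow_repMax hq _)
          (Set.mem_insert_of_mem _ hmem)) ?_
        rw [Finset.sup'_lt_iff]
        intro i _
        exact max_lt (lt_of_le_of_lt (le_max_left _ _) (hduv i))
          (lt_of_le_of_lt (le_max_right _ _) (hdi i))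
      have hs2 : S₂ (∑ i, c i • br (v i) (b i)) < d := by
        have hmem : (Finset.univ.sup' Finset.univ_nonempty
            fun i => max (p₂ (β⁻¹ • v i)) (q (b i)))
            ∈ bracketRepMax K br p₂ q (β⁻¹ • ∑ i, c i • br (v i) (b i)) := by
          refine ⟨n, c, fun i => β⁻¹ • v i, b, ?_, rfl⟩
          rw [Finset.smul_sum]
          apply Finset.sum_congr rfl
          intro i _
          rw [hsmul, smul_comm]
        refine lt_of_le_of_lt (csInf_le (bddBelow_repMax hq _)
          (Set.mem_insert_of_mem _ hmem)) ?_
        rw [Finset.sup'_lt_iff]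
        intro i _
        exact max_lt (lt_of_le_of_lt (le_max_right _ _) (hduv i))
          (lt_of_le_of_lt (le_max_right _ _) (hdi i))
      calc sInf (insert 1 {t | ∃ a b : V, x = a + b ∧ t = max (S₁ a) (S₂ b)})
            ≤ max (S₁ (∑ i, c i • br (u i) (b i))) (S₂ (∑ i, c i • br (v i) (b i))) :=
            csInf_le hbddRHS (Set.mem_insert_of_mem _ ⟨_, _, hx', rfl⟩)
        _ < d := max_lt hs1 hs2

end Core2
section Asm
set_option linter.unusedSectionVars false
set_option maxHeartbeats 1000000

variable {K : Type*} [Field K] {V : Type*} [AddCommGroup V] [Module K V]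

private structure Nice {W : Type*} [AddCommGroup W] (P : CIFSet W) : Prop where
  r_le : ∀ u, P.r u ≤ 1
  w_le : ∀ u, P.w u ≤ 1
  rhat_nn : ∀ u, 0 ≤ P.rhat u
  what_nn : ∀ u, 0 ≤ P.what u
  r0 : P.r 0 = 1
  w0 : P.w 0 = 1
  rhat0 : P.rhat 0 = 0
  what0 : P.what 0 = 0

private lemma nice_of_subspace {P : CIFSet V} (h : CIFSet.IsSubspace K P) : Nice P :=
  ⟨fun u => (h.isCIF u).1.2, fun u => (h.isCIF u).2.1.2, fun u => (h.isCIF u).2.2.1.1,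
    fun u => (h.isCIF u).2.2.2.1.1, h.r_zero, h.w_zero, h.rhat_zero, h.what_zero⟩

private lemma nice_preimage {V' : Type*} [AddCommGroup V'] {f : V → V'} (hf0 : f 0 = 0)
    {C : CIFSet V'} (h : Nice C) : Nice (CIFSet.preimage f C) := by
  refine ⟨fun u => h.r_le _, fun u => h.w_le _, fun u => h.rhat_nn _, fun u => h.what_nn _,
    ?_, ?_, ?_, ?_⟩
  · show C.r (f 0) = 1; rw [hf0, h.r0]
  · show C.w (f 0) = 1; rw [hf0, h.w0]
  · show C.rhat (f 0) = 0; rw [hf0, h.rhat0]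
  · show C.what (f 0) = 0; rw [hf0, h.what0]

private lemma smul_r_eq {α : K} (hα : α ≠ 0) (P : CIFSet V) :
    (CIFSet.smulCIF α P).r = fun u => P.r (α⁻¹ • u) := by
  funext u; simp [CIFSet.smulCIF, hα]

private lemma smul_w_eq {α : K} (hα : α ≠ 0) (P : CIFSet V) :
    (CIFSet.smulCIF α P).w = fun u => P.w (α⁻¹ • u) := by
  funext u; simp [CIFSet.smulCIF, hα]

private lemma smul_rhat_eq {α : K} (hα : α ≠ 0) (P : CIFSet V) :
    (CIFSet.smulCIF α P).rhat = fun u => P.rhat (α⁻¹ • u) := by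
  funext u; simp [CIFSet.smulCIF, hα]

private lemma smul_what_eq {α : K} (hα : α ≠ 0) (P : CIFSet V) :
    (CIFSet.smulCIF α P).what = fun u => P.what (α⁻¹ • u) := by
  funext u; simp [CIFSet.smulCIF, hα]

private lemma bracket_sum_left {br : V → V → V}
    (hadd : ∀ u v b : V, br (u + v) b = br u b + br v b)
    (hsmul : ∀ (c : K) (u b : V), br (c • u) b = c • br u b)
    {P₁ P₂ Q : CIFSet V} (h1 : Nice P₁) (h2 : Nice P₂) (hQ : Nice Q)
    {α β : K} (hα : α ≠ 0) (hβ : β ≠ 0) :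
    CIFSet.bracket K br ((CIFSet.smulCIF α P₁).sum (CIFSet.smulCIF β P₂)) Q =
      (CIFSet.smulCIF α (CIFSet.bracket K br P₁ Q)).sum
        (CIFSet.smulCIF β (CIFSet.bracket K br P₂ Q)) := by
  apply myext
  · funext x
    show sSup (insert 0 (bracketRepMin K br
        (supDecomp (CIFSet.smulCIF α P₁).r (CIFSet.smulCIF β P₂).r) Q.r x)) =
      supDecomp (CIFSet.smulCIF α (CIFSet.bracket K br P₁ Q)).r
        (CIFSet.smulCIF β (CIFSet.bracket K br P₂ Q)).r x
    rw [smul_r_eq hα, smul_r_eq hβ, smul_r_eq hα, smul_r_eq hβ]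
    exact core_sup hadd hsmul P₁.r P₂.r Q.r h1.r_le h2.r_le hQ.r_le h1.r0 h2.r0 hα hβ x
  · funext x
    show sSup (insert 0 (bracketRepMin K br
        (supDecomp (CIFSet.smulCIF α P₁).w (CIFSet.smulCIF β P₂).w) Q.w x)) =
      supDecomp (CIFSet.smulCIF α (CIFSet.bracket K br P₁ Q)).w
        (CIFSet.smulCIF β (CIFSet.bracket K br P₂ Q)).w x
    rw [smul_w_eq hα, smul_w_eq hβ, smul_w_eq hα, smul_w_eq hβ]
    exact core_sup hadd hsmul P₁.w P₂.w Q.w h1.w_le h2.w_le hQ.w_le h1.w0 h2.w0 hα hβ x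
  · funext x
    show sInf (insert 1 (bracketRepMax K br
        (infDecomp (CIFSet.smulCIF α P₁).rhat (CIFSet.smulCIF β P₂).rhat) Q.rhat x)) =
      infDecomp (CIFSet.smulCIF α (CIFSet.bracket K br P₁ Q)).rhat
        (CIFSet.smulCIF β (CIFSet.bracket K br P₂ Q)).rhat x
    rw [smul_rhat_eq hα, smul_rhat_eq hβ, smul_rhat_eq hα, smul_rhat_eq hβ]
    exact core_inf hadd hsmul P₁.rhat P₂.rhat Q.rhat h1.rhat_nn h2.rhat_nn hQ.rhat_nn
      h1.rhat0 h2.rhat0 hα hβ x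
  · funext x
    show sInf (insert 1 (bracketRepMax K br
        (infDecomp (CIFSet.smulCIF α P₁).what (CIFSet.smulCIF β P₂).what) Q.what x)) =
      infDecomp (CIFSet.smulCIF α (CIFSet.bracket K br P₁ Q)).what
        (CIFSet.smulCIF β (CIFSet.bracket K br P₂ Q)).what x
    rw [smul_what_eq hα, smul_what_eq hβ, smul_what_eq hα, smul_what_eq hβ]
    exact core_inf hadd hsmul P₁.what P₂.what Q.what h1.what_nn h2.what_nn hQ.what_nn
      h1.what0 h2.what0 hα hβ x

end Asm
section Asm2
set_option linter.unusedSectionVars false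
set_option maxHeartbeats 1000000

variable {K : Type*} [Field K] {V : Type*} [AddCommGroup V] [Module K V]

private lemma bracket_sum_right {br : V → V → V}
    (hadd : ∀ u v b : V, br b (u + v) = br b u + br b v)
    (hsmul : ∀ (c : K) (u b : V), br b (c • u) = c • br b u)
    {P Q₁ Q₂ : CIFSet V} (hP : Nice P) (h1 : Nice Q₁) (h2 : Nice Q₂)
    {α β : K} (hα : α ≠ 0) (hβ : β ≠ 0) :
    CIFSet.bracket K br P ((CIFSet.smulCIF α Q₁).sum (CIFSet.smulCIF β Q₂)) =
      (CIFSet.smulCIF α (CIFSet.bracket K br P Q₁)).sum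
        (CIFSet.smulCIF β (CIFSet.bracket K br P Q₂)) := by
  apply myext
  · funext x
    show sSup (insert 0 (bracketRepMin K br P.r
        (supDecomp (CIFSet.smulCIF α Q₁).r (CIFSet.smulCIF β Q₂).r) x)) =
      supDecomp (CIFSet.smulCIF α (CIFSet.bracket K br P Q₁)).r
        (CIFSet.smulCIF β (CIFSet.bracket K br P Q₂)).r x
    rw [smul_r_eq hα Q₁, smul_r_eq hβ Q₂, smul_r_eq hα (CIFSet.bracket K br P Q₁),
      smul_r_eq hβ (CIFSet.bracket K br P Q₂), repMin_flip]
    have e₁ : (fun s => (CIFSet.bracket K br P Q₁).r (α⁻¹ • s)) =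
        fun s => sSup (insert 0 (bracketRepMin K (fun u v => br v u) Q₁.r P.r (α⁻¹ • s))) := by
      funext s
      show sSup (insert 0 (bracketRepMin K br P.r Q₁.r (α⁻¹ • s))) = _
      rw [repMin_flip]
    have e₂ : (fun s => (CIFSet.bracket K br P Q₂).r (β⁻¹ • s)) =
        fun s => sSup (insert 0 (bracketRepMin K (fun u v => br v u) Q₂.r P.r (β⁻¹ • s))) := by
      funext s
      show sSup (insert 0 (bracketRepMin K br P.r Q₂.r (β⁻¹ • s))) = _
      rw [repMin_flip]
    rw [e₁, e₂]
    exact core_sup (fun u v b => hadd u v b) (fun c u b => hsmul c u b)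
      Q₁.r Q₂.r P.r h1.r_le h2.r_le hP.r_le h1.r0 h2.r0 hα hβ x
  · funext x
    show sSup (insert 0 (bracketRepMin K br P.w
        (supDecomp (CIFSet.smulCIF α Q₁).w (CIFSet.smulCIF β Q₂).w) x)) =
      supDecomp (CIFSet.smulCIF α (CIFSet.bracket K br P Q₁)).w
        (CIFSet.smulCIF β (CIFSet.bracket K br P Q₂)).w x
    rw [smul_w_eq hα Q₁, smul_w_eq hβ Q₂, smul_w_eq hα (CIFSet.bracket K br P Q₁),
      smul_w_eq hβ (CIFSet.bracket K br P Q₂), repMin_flip]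
    have e₁ : (fun s => (CIFSet.bracket K br P Q₁).w (α⁻¹ • s)) =
        fun s => sSup (insert 0 (bracketRepMin K (fun u v => br v u) Q₁.w P.w (α⁻¹ • s))) := by
      funext s
      show sSup (insert 0 (bracketRepMin K br P.w Q₁.w (α⁻¹ • s))) = _
      rw [repMin_flip]
    have e₂ : (fun s => (CIFSet.bracket K br P Q₂).w (β⁻¹ • s)) =
        fun s => sSup (insert 0 (bracketRepMin K (fun u v => br v u) Q₂.w P.w (β⁻¹ • s))) := by
      funext s
      show sSup (insert 0 (bracketRepMin K br P.w Q₂.w (β⁻¹ • s))) = _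
      rw [repMin_flip]
    rw [e₁, e₂]
    exact core_sup (fun u v b => hadd u v b) (fun c u b => hsmul c u b)
      Q₁.w Q₂.w P.w h1.w_le h2.w_le hP.w_le h1.w0 h2.w0 hα hβ x
  · funext x
    show sInf (insert 1 (bracketRepMax K br P.rhat
        (infDecomp (CIFSet.smulCIF α Q₁).rhat (CIFSet.smulCIF β Q₂).rhat) x)) =
      infDecomp (CIFSet.smulCIF α (CIFSet.bracket K br P Q₁)).rhat
        (CIFSet.smulCIF β (CIFSet.bracket K br P Q₂)).rhat x
    rw [smul_rhat_eq hα Q₁, smul_rhat_eq hβ Q₂, smul_rhat_eq hα (CIFSet.bracket K br P Q₁),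
      smul_rhat_eq hβ (CIFSet.bracket K br P Q₂), repMax_flip]
    have e₁ : (fun s => (CIFSet.bracket K br P Q₁).rhat (α⁻¹ • s)) =
        fun s => sInf (insert 1 (bracketRepMax K (fun u v => br v u) Q₁.rhat P.rhat (α⁻¹ • s))) := by
      funext s
      show sInf (insert 1 (bracketRepMax K br P.rhat Q₁.rhat (α⁻¹ • s))) = _
      rw [repMax_flip]
    have e₂ : (fun s => (CIFSet.bracket K br P Q₂).rhat (β⁻¹ • s)) =
        fun s => sInf (insert 1 (bracketRepMax K (fun u v => br v u) Q₂.rhat P.rhat (β⁻¹ • s))) := by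
      funext s
      show sInf (insert 1 (bracketRepMax K br P.rhat Q₂.rhat (β⁻¹ • s))) = _
      rw [repMax_flip]
    rw [e₁, e₂]
    exact core_inf (fun u v b => hadd u v b) (fun c u b => hsmul c u b)
      Q₁.rhat Q₂.rhat P.rhat h1.rhat_nn h2.rhat_nn hP.rhat_nn h1.rhat0 h2.rhat0 hα hβ x
  · funext x
    show sInf (insert 1 (bracketRepMax K br P.what
        (infDecomp (CIFSet.smulCIF α Q₁).what (CIFSet.smulCIF β Q₂).what) x)) =
      infDecomp (CIFSet.smulCIF α (CIFSet.bracket K br P Q₁)).what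
        (CIFSet.smulCIF β (CIFSet.bracket K br P Q₂)).what x
    rw [smul_what_eq hα Q₁, smul_what_eq hβ Q₂, smul_what_eq hα (CIFSet.bracket K br P Q₁),
      smul_what_eq hβ (CIFSet.bracket K br P Q₂), repMax_flip]
    have e₁ : (fun s => (CIFSet.bracket K br P Q₁).what (α⁻¹ • s)) =
        fun s => sInf (insert 1 (bracketRepMax K (fun u v => br v u) Q₁.what P.what (α⁻¹ • s))) := by
      funext s
      show sInf (insert 1 (bracketRepMax K br P.what Q₁.what (α⁻¹ • s))) = _
      rw [repMax_flip]
    have e₂ : (fun s => (CIFSet.bracket K br P Q₂).what (β⁻¹ • s)) =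
        fun s => sInf (insert 1 (bracketRepMax K (fun u v => br v u) Q₂.what P.what (β⁻¹ • s))) := by
      funext s
      show sInf (insert 1 (bracketRepMax K br P.what Q₂.what (β⁻¹ • s))) = _
      rw [repMax_flip]
    rw [e₁, e₂]
    exact core_inf (fun u v b => hadd u v b) (fun c u b => hsmul c u b)
      Q₁.what Q₂.what P.what h1.what_nn h2.what_nn hP.what_nn h1.what0 h2.what0 hα hβ x

private lemma preimage_sum {V' : Type*} [AddCommGroup V'] (f : V → V')
    (hsurj : Function.Surjective f) (haddf : ∀ x y, f (x + y) = f x + f y)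
    (hsubf : ∀ x y, f (x - y) = f x - f y) (C D : CIFSet V') :
    CIFSet.preimage f (C.sum D) = (CIFSet.preimage f C).sum (CIFSet.preimage f D) := by
  have hset : ∀ (op : ℝ → ℝ → ℝ) (g h : V' → ℝ) (x : V),
      {t | ∃ a b : V', f x = a + b ∧ t = op (g a) (h b)} =
      {t | ∃ u v : V, x = u + v ∧ t = op (g (f u)) (h (f v))} := by
    intro op g h x
    ext t
    constructor
    · rintro ⟨a, b, hab, rfl⟩
      obtain ⟨u, rfl⟩ := hsurj a
      refine ⟨u, x - u, by abel, ?_⟩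
      rw [hsubf, hab, add_sub_cancel_left]
    · rintro ⟨u, v, rfl, rfl⟩
      exact ⟨f u, f v, haddf u v, rfl⟩
  apply myext
  · funext x
    show supDecomp C.r D.r (f x) = supDecomp (fun u => C.r (f u)) (fun v => D.r (f v)) x
    rw [supDecomp, supDecomp, hset]
  · funext x
    show supDecomp C.w D.w (f x) = supDecomp (fun u => C.w (f u)) (fun v => D.w (f v)) x
    rw [supDecomp, supDecomp, hset]
  · funext x
    show infDecomp C.rhat D.rhat (f x) =
      infDecomp (fun u => C.rhat (f u)) (fun v => D.rhat (f v)) x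
    rw [infDecomp, infDecomp, hset]
  · funext x
    show infDecomp C.what D.what (f x) =
      infDecomp (fun u => C.what (f u)) (fun v => D.what (f v)) x
    rw [infDecomp, infDecomp, hset]

private lemma preimage_smul {V' : Type*} [AddCommGroup V'] [Module K V'] (f : V → V')
    (hsmulf : ∀ (c : K) (x : V), f (c • x) = c • f x)
    {c : K} (hc : c ≠ 0) (C : CIFSet V') :
    CIFSet.preimage f (CIFSet.smulCIF c C) = CIFSet.smulCIF c (CIFSet.preimage f C) := by
  apply myext
  · funext x
    show (CIFSet.smulCIF c C).r (f x) = (CIFSet.smulCIF c (CIFSet.preimage f C)).r x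
    rw [smul_r_eq hc, smul_r_eq hc]
    show C.r (c⁻¹ • f x) = C.r (f (c⁻¹ • x))
    rw [hsmulf]
  · funext x
    show (CIFSet.smulCIF c C).w (f x) = (CIFSet.smulCIF c (CIFSet.preimage f C)).w x
    rw [smul_w_eq hc, smul_w_eq hc]
    show C.w (c⁻¹ • f x) = C.w (f (c⁻¹ • x))
    rw [hsmulf]
  · funext x
    show (CIFSet.smulCIF c C).rhat (f x) = (CIFSet.smulCIF c (CIFSet.preimage f C)).rhat x
    rw [smul_rhat_eq hc, smul_rhat_eq hc]
    show C.rhat (c⁻¹ • f x) = C.rhat (f (c⁻¹ • x))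
    rw [hsmulf]
  · funext x
    show (CIFSet.smulCIF c C).what (f x) = (CIFSet.smulCIF c (CIFSet.preimage f C)).what x
    rw [smul_what_eq hc, smul_what_eq hc]
    show C.what (c⁻¹ • f x) = C.what (f (c⁻¹ • x))
    rw [hsmulf]

end Asm2
theorem preimage_bracket_bilinear {K : Type*} [Field K] {V V' : Type*} [AddCommGroup V] [Module K V]
    [AddCommGroup V'] [Module K V']
    (V0 V1 : Submodule K V) (W0 W1 : Submodule K V')
    (br : V → V → V) (br' : V' → V' → V')
    (hLS : IsLieSuper K V0 V1 br) (hLS' : IsLieSuper K W0 W1 br')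
    (f : V → V') (hf : IsAntiHom K V0 V1 W0 W1 br br' f)
    (hsurj : Function.Surjective f)
    (A₁ A₂ B₁ B₂ A B : CIFSet V')
    (hA₁ : CIFSet.IsSubspace K A₁) (hA₂ : CIFSet.IsSubspace K A₂)
    (hB₁ : CIFSet.IsSubspace K B₁) (hB₂ : CIFSet.IsSubspace K B₂)
    (hA : CIFSet.IsSubspace K A) (hB : CIFSet.IsSubspace K B)
    (α β : K) (hα : α ≠ 0) (hβ : β ≠ 0)
    (L' : List (CIFSet V')) (L : List (CIFSet V))
    (hL' : L' = [A₁, A₂, B₁, B₂, A, B,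
      CIFSet.smulCIF α A₁, CIFSet.smulCIF β A₂,
      (CIFSet.smulCIF α A₁).sum (CIFSet.smulCIF β A₂),
      CIFSet.smulCIF α B₁, CIFSet.smulCIF β B₂,
      (CIFSet.smulCIF α B₁).sum (CIFSet.smulCIF β B₂)])
    (hL : L = [CIFSet.preimage f A₁, CIFSet.preimage f A₂, CIFSet.preimage f B₁,
      CIFSet.preimage f B₂, CIFSet.preimage f A, CIFSet.preimage f B,
      CIFSet.preimage f ((CIFSet.smulCIF α A₁).sum (CIFSet.smulCIF β A₂)),
      CIFSet.preimage f ((CIFSet.smulCIF α B₁).sum (CIFSet.smulCIF β B₂)),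
      CIFSet.bracket K br (CIFSet.preimage f A₁) (CIFSet.preimage f B),
      CIFSet.bracket K br (CIFSet.preimage f A₂) (CIFSet.preimage f B),
      CIFSet.smulCIF α (CIFSet.bracket K br (CIFSet.preimage f A₁) (CIFSet.preimage f B)),
      CIFSet.smulCIF β (CIFSet.bracket K br (CIFSet.preimage f A₂) (CIFSet.preimage f B)),
      CIFSet.bracket K br (CIFSet.preimage f A) (CIFSet.preimage f B₁),
      CIFSet.bracket K br (CIFSet.preimage f A) (CIFSet.preimage f B₂),
      CIFSet.smulCIF α (CIFSet.bracket K br (CIFSet.preimage f A) (CIFSet.preimage f B₁)),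
      CIFSet.smulCIF β (CIFSet.bracket K br (CIFSet.preimage f A) (CIFSet.preimage f B₂))])
    (hhom' : ∀ C ∈ L', ∀ D ∈ L', C.Homog D)
    (hhom : ∀ C ∈ L, ∀ D ∈ L, C.Homog D) :
    CIFSet.bracket K br
        (CIFSet.preimage f ((CIFSet.smulCIF α A₁).sum (CIFSet.smulCIF β A₂)))
        (CIFSet.preimage f B)
      = (CIFSet.smulCIF α (CIFSet.bracket K br (CIFSet.preimage f A₁) (CIFSet.preimage f B))).sum
          (CIFSet.smulCIF β (CIFSet.bracket K br (CIFSet.preimage f A₂) (CIFSet.preimage f B))) ∧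
    CIFSet.bracket K br (CIFSet.preimage f A)
        (CIFSet.preimage f ((CIFSet.smulCIF α B₁).sum (CIFSet.smulCIF β B₂)))
      = (CIFSet.smulCIF α (CIFSet.bracket K br (CIFSet.preimage f A) (CIFSet.preimage f B₁))).sum
          (CIFSet.smulCIF β (CIFSet.bracket K br (CIFSet.preimage f A) (CIFSet.preimage f B₂))) := by
  have hsubf : ∀ x y, f (x - y) = f x - f y := by
    intro x y
    rw [sub_eq_add_neg, hf.map_add, sub_eq_add_neg]
    congr 1
    rw [← neg_one_smul K y, hf.map_smul, neg_one_smul]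
  have hf0 : f 0 = 0 := by
    have h := hf.map_smul 0 0
    simpa using h
  have hP₁ : Nice (CIFSet.preimage f A₁) := nice_preimage hf0 (nice_of_subspace hA₁)
  have hP₂ : Nice (CIFSet.preimage f A₂) := nice_preimage hf0 (nice_of_subspace hA₂)
  have hQ₁ : Nice (CIFSet.preimage f B₁) := nice_preimage hf0 (nice_of_subspace hB₁)
  have hQ₂ : Nice (CIFSet.preimage f B₂) := nice_preimage hf0 (nice_of_subspace hB₂)
  have hPA : Nice (CIFSet.preimage f A) := nice_preimage hf0 (nice_of_subspace hA)
  have hQB : Nice (CIFSet.preimage f B) := nice_preimage hf0 (nice_of_subspace hB)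
  constructor
  · rw [preimage_sum f hsurj hf.map_add hsubf, preimage_smul f hf.map_smul hα,
      preimage_smul f hf.map_smul hβ]
    exact bracket_sum_left hLS.add_left hLS.smul_left hP₁ hP₂ hQB hα hβ
  · rw [preimage_sum f hsurj hf.map_add hsubf, preimage_smul f hf.map_smul hα,
      preimage_smul f hf.map_smul hβ]
    exact bracket_sum_right (fun u v b => hLS.add_right b u v)
      (fun c u b => hLS.smul_right c b u) hPA hQ₁ hQ₂ hα hβ

end CIF
end
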